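/- arXiv:1406.1579 — 5 statements merged into one kernel-verified Lean document; each statement's English description precedes it below -/
import Mathlib

section
/- Let 𝕄, 𝕄_T, 𝕄_H be structured sparsity models on {1,…,n}, let 0 ≤ δ < 1 and 0 < c_H ≤ 1 be reals with α₀ := c_H(1−δ) − δ > 0, and set β₀ := (1+c_H)√(1+δ). Suppose A ∈ ℝ^{m×n} has the (δ, 𝕄 ⊕ 𝕄_T ⊕ 𝕄_H)-model-RIP. Let x, xⁱ ∈ ℝⁿ with supp(x) ∈ 𝕄⁺ and supp(xⁱ) ∈ 𝕄_T⁺, let e ∈ ℝᵐ, set r = x − xⁱ and b = Aᵀ(Ar + e). Let Γ ∈ 𝕄_H⁺ satisfy ‖b_Γ‖₂ ≥ c_H‖b_Ω‖₂ for every Ω ∈ 𝕄_T ⊕ 𝕄. Then ‖r_{Γᶜ}‖₂ ≤ √(1−α₀²)·‖r‖₂ + (β₀/α₀ + α₀β₀/√(1−α₀²))·‖e‖₂. -/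
/-- The ℓ₂ norm of a vector in ℝⁿ. -/
noncomputable def l2norm {k : ℕ} (x : Fin k → ℝ) : ℝ := Real.sqrt (∑ i, (x i) ^ 2)

/-- Restriction of a vector to a set of coordinates: agrees with `x` on `Ω`, zero elsewhere. -/
noncomputable def restr {k : ℕ} (x : Fin k → ℝ) (Ω : Set (Fin k)) : Fin k → ℝ := Ω.indicator x

/-- The closure of a structured sparsity model under taking subsets. -/
def modelPlus {k : ℕ} (M : Set (Set (Fin k))) : Set (Set (Fin k)) :=
  {Ω | ∃ S ∈ M, Ω ⊆ S}

/-- The sum of two structured sparsity models. -/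
def modelSum {k : ℕ} (M₁ M₂ : Set (Set (Fin k))) : Set (Set (Fin k)) :=
  {Ω | ∃ S₁ ∈ M₁, ∃ S₂ ∈ M₂, Ω = S₁ ∪ S₂}

/-- A matrix `A` has the `(δ, M)`-model-RIP. -/
def hasModelRIP {m n : ℕ} (A : Matrix (Fin m) (Fin n) ℝ) (δ : ℝ)
    (M : Set (Set (Fin n))) : Prop :=
  ∀ x : Fin n → ℝ, Function.support x ∈ modelPlus M →
    (1 - δ) * (l2norm x) ^ 2 ≤ (l2norm (A.mulVec x)) ^ 2 ∧
    (l2norm (A.mulVec x)) ^ 2 ≤ (1 + δ) * (l2norm x) ^ 2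


/-
The vector `b = Aᵀ (A r + e)` is close to `r` on every set `T` covered by the RIP model:
`‖(b - r)_T‖ ≤ η := δ ‖r‖ + √(1 + δ) ‖e‖`, by testing `b - r` against its own restriction to `T`
and polarizing the RIP. With `Ω = supp x ∪ supp xⁱ ⊇ supp r` this gives `‖r‖ ≤ ‖b_Ω‖ + η` and
`‖b_Γ‖ ≤ ‖r_Γ‖ + η`, so the head condition forces `‖r_Γ‖ ≥ α₀ ‖r‖ - β₀ ‖e‖`, and
`‖r‖² = ‖r_Γ‖² + ‖r_Γᶜ‖²` bounds the tail. When `α₀ = 1` (so `δ = 0`, `c_H = 1`) the right-hand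
side is `2 ‖e‖`, since `x / 0 = 0`; there one compares `b` on `Ω \ Γ` with `b` on `Γ \ Ω` instead.
-/
open Matrix

section L2norm

variable {k : ℕ}

lemma l2norm_eq_norm_toLp (x : Fin k → ℝ) :
    l2norm x = ‖(WithLp.toLp 2 x : EuclideanSpace ℝ (Fin k))‖ := by
  simp [l2norm, EuclideanSpace.norm_eq]

lemma l2norm_nonneg (x : Fin k → ℝ) : 0 ≤ l2norm x := Real.sqrt_nonneg _

@[simp]
lemma l2norm_zero : l2norm (0 : Fin k → ℝ) = 0 := by
  simp [l2norm]

lemma l2norm_eq_zero {x : Fin k → ℝ} : l2norm x = 0 ↔ x = 0 := by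
  simp [l2norm_eq_norm_toLp]

lemma l2norm_smul (c : ℝ) (x : Fin k → ℝ) : l2norm (c • x) = |c| * l2norm x := by
  simp [l2norm_eq_norm_toLp, norm_smul]

lemma abs_l2norm_sub_l2norm_le (x y : Fin k → ℝ) :
    |l2norm x - l2norm y| ≤ l2norm (x - y) := by
  simpa [l2norm_eq_norm_toLp] using
    abs_norm_sub_norm_le (WithLp.toLp 2 x : EuclideanSpace ℝ (Fin k)) (WithLp.toLp 2 y)

lemma l2norm_sq_eq_dotProduct (x : Fin k → ℝ) : l2norm x ^ 2 = x ⬝ᵥ x := by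
  rw [l2norm, Real.sq_sqrt (Finset.sum_nonneg fun i _ => sq_nonneg _)]
  simp [dotProduct, sq]

lemma dotProduct_le_l2norm_mul_l2norm (x y : Fin k → ℝ) : x ⬝ᵥ y ≤ l2norm x * l2norm y :=
  Real.sum_mul_le_sqrt_mul_sqrt _ _ _

end L2norm

section Restriction

variable {k : ℕ}

lemma restr_sub (x y : Fin k → ℝ) (T : Set (Fin k)) :
    restr (x - y) T = restr x T - restr y T :=
  Set.indicator_sub _ _ _

lemma abs_l2norm_restr_sub_l2norm_restr_le (x y : Fin k → ℝ) (T : Set (Fin k)) :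
    |l2norm (restr x T) - l2norm (restr y T)| ≤ l2norm (restr (x - y) T) :=
  restr_sub x y T ▸ abs_l2norm_sub_l2norm_le _ _

lemma restr_of_support_subset {x : Fin k → ℝ} {T : Set (Fin k)}
    (h : Function.support x ⊆ T) : restr x T = x :=
  Set.indicator_eq_self.2 h

lemma restr_eq_restr_of_inter_eq {x : Fin k → ℝ} {Ω S T : Set (Fin k)}
    (h : Function.support x ⊆ Ω) (hST : S ∩ Ω = T ∩ Ω) : restr x S = restr x T := by
  rw [← Set.indicator_eq_self.2 h]
  simp only [restr, Set.indicator_indicator, hST]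

lemma l2norm_restr_sq (x : Fin k → ℝ) (T : Set (Fin k)) :
    l2norm (restr x T) ^ 2 = x ⬝ᵥ restr x T := by
  rw [l2norm_sq_eq_dotProduct]
  refine Finset.sum_congr rfl fun i _ => ?_
  by_cases hi : i ∈ T <;> simp [restr, hi]

lemma l2norm_sq_eq_restr_add_restr_compl (x : Fin k → ℝ) (T : Set (Fin k)) :
    l2norm x ^ 2 = l2norm (restr x T) ^ 2 + l2norm (restr x Tᶜ) ^ 2 := by
  simp only [l2norm_sq_eq_dotProduct, dotProduct, ← Finset.sum_add_distrib]
  refine Finset.sum_congr rfl fun i _ => ?_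
  by_cases hi : i ∈ T <;> simp [restr, hi]

lemma l2norm_restr_sq_eq_inter_add_compl_inter (x : Fin k → ℝ) (T S : Set (Fin k)) :
    l2norm (restr x T) ^ 2 = l2norm (restr x (S ∩ T)) ^ 2 + l2norm (restr x (Sᶜ ∩ T)) ^ 2 := by
  simpa only [restr, Set.indicator_indicator] using
    l2norm_sq_eq_restr_add_restr_compl (restr x T) S

lemma l2norm_restr_compl_inter_le {x : Fin k → ℝ} {Γ Ω : Set (Fin k)}
    (h : l2norm (restr x Ω) ≤ l2norm (restr x Γ)) :
    l2norm (restr x (Γᶜ ∩ Ω)) ≤ l2norm (restr x (Ωᶜ ∩ Γ)) := by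
  have hΩ := l2norm_restr_sq_eq_inter_add_compl_inter x Ω Γ
  have hΓ := l2norm_restr_sq_eq_inter_add_compl_inter x Γ Ω
  rw [Set.inter_comm Ω Γ] at hΓ
  have hsq := pow_le_pow_left₀ (l2norm_nonneg _) h 2
  exact (pow_le_pow_iff_left₀ (l2norm_nonneg _) (l2norm_nonneg _) two_ne_zero).1 (by linarith)

end Restriction

section ModelRIP

variable {m n : ℕ} {A : Matrix (Fin m) (Fin n) ℝ} {δ : ℝ} {MM : Set (Set (Fin n))}
  {U : Set (Fin n)}

lemma l2norm_mulVec_le_of_hasModelRIP (hA : hasModelRIP A δ MM) (hU : U ∈ MM)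
    {v : Fin n → ℝ} (hv : Function.support v ⊆ U) :
    l2norm (A *ᵥ v) ≤ Real.sqrt (1 + δ) * l2norm v := by
  rw [← Real.sqrt_sq (l2norm_nonneg (A *ᵥ v)), ← Real.sqrt_sq (l2norm_nonneg v),
    ← Real.sqrt_mul' _ (sq_nonneg _)]
  exact Real.sqrt_le_sqrt (hA v ⟨U, hU, hv⟩).2

/-- Polarization of the two RIP inequalities for `v + w` and `v - w`. -/
lemma mulVec_dotProduct_mulVec_le_add_sq (hA : hasModelRIP A δ MM) (hU : U ∈ MM)
    {v w : Fin n → ℝ} (hv : Function.support v ⊆ U) (hw : Function.support w ⊆ U) :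
    A *ᵥ v ⬝ᵥ A *ᵥ w ≤ v ⬝ᵥ w + δ / 2 * (l2norm v ^ 2 + l2norm w ^ 2) := by
  have hvw := Set.union_subset hv hw
  have hadd := (hA (v + w) ⟨U, hU, (Function.support_add v w).trans hvw⟩).2
  have hsub := (hA (v - w) ⟨U, hU, (Function.support_sub v w).trans hvw⟩).1
  simp only [l2norm_sq_eq_dotProduct, mulVec_add, mulVec_sub, add_dotProduct, dotProduct_add,
    sub_dotProduct, dotProduct_sub, dotProduct_comm w v, dotProduct_comm (A *ᵥ w) (A *ᵥ v)]
    at hadd hsub ⊢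
  linarith

lemma mulVec_dotProduct_mulVec_le (hA : hasModelRIP A δ MM) (hU : U ∈ MM)
    {v w : Fin n → ℝ} (hv : Function.support v ⊆ U) (hw : Function.support w ⊆ U) :
    A *ᵥ v ⬝ᵥ A *ᵥ w ≤ v ⬝ᵥ w + δ * (l2norm v * l2norm w) := by
  rcases eq_or_ne v 0 with rfl | hv0
  · simp
  rcases eq_or_ne w 0 with rfl | hw0
  · simp
  set a := l2norm v
  set c := l2norm w
  have hac : 0 < a * c := mul_pos
    ((l2norm_nonneg v).lt_of_ne' (l2norm_eq_zero.not.2 hv0))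
    ((l2norm_nonneg w).lt_of_ne' (l2norm_eq_zero.not.2 hw0))
  -- rescale `v` and `w` to the same norm `a * c` before polarizing
  have h := mulVec_dotProduct_mulVec_le_add_sq hA hU
    ((Function.support_const_smul_subset c v).trans hv)
    ((Function.support_const_smul_subset a w).trans hw)
  simp only [mulVec_smul, smul_dotProduct, dotProduct_smul, smul_eq_mul, l2norm_smul, mul_pow,
    sq_abs] at h
  nlinarith

lemma l2norm_restr_transpose_mulVec_sub_le (hδ : 0 ≤ δ) (hA : hasModelRIP A δ MM)
    (hU : U ∈ MM) {r : Fin n → ℝ} (hr : Function.support r ⊆ U) (e : Fin m → ℝ)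
    {T : Set (Fin n)} (hT : T ⊆ U) :
    l2norm (restr (Aᵀ *ᵥ (A *ᵥ r + e) - r) T) ≤
      δ * l2norm r + Real.sqrt (1 + δ) * l2norm e := by
  set d := restr (Aᵀ *ᵥ (A *ᵥ r + e) - r) T
  have hd : Function.support d ⊆ U := (Set.support_indicator_subset).trans hT
  have hsq : l2norm d ^ 2 = (Aᵀ *ᵥ (A *ᵥ r + e) - r) ⬝ᵥ d := l2norm_restr_sq _ _
  clear_value d
  rw [sub_dotProduct, mulVec_transpose, ← dotProduct_mulVec, add_dotProduct] at hsq
  have hcross := mulVec_dotProduct_mulVec_le hA hU hr hd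
  have hnoise : e ⬝ᵥ A *ᵥ d ≤ l2norm e * (Real.sqrt (1 + δ) * l2norm d) :=
    (dotProduct_le_l2norm_mul_l2norm _ _).trans
      (mul_le_mul_of_nonneg_left (l2norm_mulVec_le_of_hasModelRIP hA hU hd) (l2norm_nonneg e))
  have hη : 0 ≤ δ * l2norm r + Real.sqrt (1 + δ) * l2norm e :=
    add_nonneg (mul_nonneg hδ (l2norm_nonneg r)) (mul_nonneg (Real.sqrt_nonneg _) (l2norm_nonneg e))
  nlinarith [l2norm_nonneg d]

end ModelRIP

section HeadSelection

variable {k : ℕ} {b r : Fin k → ℝ} {Γ Ω : Set (Fin k)} {η : ℝ}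

lemma sub_le_l2norm_restr_of_head {c : ℝ} (hc : 0 ≤ c) (hr : Function.support r ⊆ Ω)
    (hnoise : ∀ T ⊆ Γ ∪ Ω, l2norm (restr (b - r) T) ≤ η)
    (hhead : c * l2norm (restr b Ω) ≤ l2norm (restr b Γ)) :
    c * l2norm r - (1 + c) * η ≤ l2norm (restr r Γ) := by
  have hΓ := (abs_le.1 ((abs_l2norm_restr_sub_l2norm_restr_le b r Γ).trans
    (hnoise Γ Set.subset_union_left))).2
  have hΩ := (abs_le.1 ((abs_l2norm_restr_sub_l2norm_restr_le b r Ω).trans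
    (hnoise Ω Set.subset_union_right))).1
  rw [restr_of_support_subset hr] at hΩ
  have := mul_le_mul_of_nonneg_left (show l2norm r - η ≤ l2norm (restr b Ω) by linarith) hc
  linarith

lemma l2norm_restr_compl_le_of_head (hr : Function.support r ⊆ Ω)
    (hnoise : ∀ T ⊆ Γ ∪ Ω, l2norm (restr (b - r) T) ≤ η)
    (hhead : l2norm (restr b Ω) ≤ l2norm (restr b Γ)) :
    l2norm (restr r Γᶜ) ≤ 2 * η := by
  have hp : restr r Γᶜ = restr r (Γᶜ ∩ Ω) :=
    restr_eq_restr_of_inter_eq hr (by rw [Set.inter_assoc, Set.inter_self])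
  have hq : restr r (Ωᶜ ∩ Γ) = 0 := by
    rw [restr_eq_restr_of_inter_eq hr (T := ∅)
      (by rw [Set.inter_right_comm, Set.compl_inter_self, Set.empty_inter, Set.empty_inter])]
    exact Set.indicator_empty _
  have hbp := (abs_le.1 ((abs_l2norm_restr_sub_l2norm_restr_le b r (Γᶜ ∩ Ω)).trans
    (hnoise _ (Set.inter_subset_right.trans Set.subset_union_right)))).1
  have hbq := (abs_le.1 ((abs_l2norm_restr_sub_l2norm_restr_le b r (Ωᶜ ∩ Γ)).trans
    (hnoise _ (Set.inter_subset_right.trans Set.subset_union_left)))).2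
  rw [← hp] at hbp
  rw [hq, l2norm_zero] at hbq
  linarith [l2norm_restr_compl_inter_le hhead]

end HeadSelection

lemma le_sqrt_one_sub_sq_mul_add {α β R t s ε : ℝ} (hα : 0 < α) (hα1 : α < 1) (hβ : 0 ≤ β)
    (hR : 0 ≤ R) (hε : 0 ≤ ε) (hsum : R ^ 2 = t ^ 2 + s ^ 2) (ht : α * R - β * ε ≤ t) :
    s ≤ Real.sqrt (1 - α ^ 2) * R + (β / α + α * β / Real.sqrt (1 - α ^ 2)) * ε := by
  have hpos : 0 < 1 - α ^ 2 := by nlinarith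
  set D := Real.sqrt (1 - α ^ 2)
  have hD : 0 < D := Real.sqrt_pos.2 hpos
  have hD2 : D ^ 2 = 1 - α ^ 2 := Real.sq_sqrt hpos.le
  have hDK : D * (α * β / D) = α * β := mul_div_cancel₀ _ hD.ne'
  have hK : 0 ≤ α * β / D := by positivity
  have hβα : 0 ≤ β / α * ε := by positivity
  rcases le_or_gt (α * R) (β * ε) with hsmall | hbig
  · have hsR : s ≤ R := abs_le_of_sq_le_sq' (by nlinarith) hR |>.2
    have hRε : R ≤ β / α * ε := by
      rw [div_mul_eq_mul_div, le_div_iff₀ hα]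
      linarith
    nlinarith
  · have ht2 := pow_le_pow_left₀ (by linarith) ht 2
    have hexpand : (D * R + α * β / D * ε) ^ 2 =
        (1 - α ^ 2) * R ^ 2 + 2 * (α * β) * (R * ε) + (α * β / D * ε) ^ 2 := by
      linear_combination R ^ 2 * hD2 + 2 * R * ε * hDK
    have hs2 : s ^ 2 ≤ (D * R + α * β / D * ε) ^ 2 := by
      nlinarith [sq_nonneg (α * β / D * ε), sq_nonneg (β * ε)]
    have := (abs_le_of_sq_le_sq' hs2 (by positivity)).2
    linarith

theorem stmt0_general {n m : ℕ}
    (M MT MH : Set (Set (Fin n)))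
    (δ cH : ℝ) (hδ0 : 0 ≤ δ) (hcH0 : 0 < cH) (hcH1 : cH ≤ 1)
    (α₀ β₀ : ℝ) (hα₀ : α₀ = cH * (1 - δ) - δ) (hα₀pos : 0 < α₀)
    (hβ₀ : β₀ = (1 + cH) * Real.sqrt (1 + δ))
    (A : Matrix (Fin m) (Fin n) ℝ)
    (hA : hasModelRIP A δ (modelSum (modelSum M MT) MH))
    (x xi : Fin n → ℝ)
    (hx : Function.support x ∈ modelPlus M)
    (hxi : Function.support xi ∈ modelPlus MT)
    (e : Fin m → ℝ)
    (r : Fin n → ℝ) (hr : r = x - xi)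
    (b : Fin n → ℝ) (hb : b = A.transpose.mulVec (A.mulVec r + e))
    (Γ : Set (Fin n)) (hΓ : Γ ∈ modelPlus MH)
    (hhead : ∀ Ω ∈ modelSum MT M, l2norm (restr b Γ) ≥ cH * l2norm (restr b Ω)) :
    l2norm (restr r Γᶜ) ≤ Real.sqrt (1 - α₀ ^ 2) * l2norm r +
      (β₀ / α₀ + α₀ * β₀ / Real.sqrt (1 - α₀ ^ 2)) * l2norm e := by
  obtain ⟨S, hS, hxS⟩ := hx
  obtain ⟨S', hS', hxiS'⟩ := hxi
  obtain ⟨SH, hSH, hΓSH⟩ := hΓ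
  have hΩ : S ∪ S' ∈ modelSum MT M := ⟨S', hS', S, hS, Set.union_comm _ _⟩
  have hU : S ∪ S' ∪ SH ∈ modelSum (modelSum M MT) MH := ⟨_, ⟨S, hS, S', hS', rfl⟩, SH, hSH, rfl⟩
  have hrΩ : Function.support r ⊆ S ∪ S' :=
    hr ▸ (Function.support_sub x xi).trans (Set.union_subset_union hxS hxiS')
  have hnoise : ∀ T ⊆ Γ ∪ (S ∪ S'),
      l2norm (restr (b - r) T) ≤ δ * l2norm r + Real.sqrt (1 + δ) * l2norm e := fun T hT =>
    hb ▸ l2norm_restr_transpose_mulVec_sub_le hδ0 hA hU (hrΩ.trans Set.subset_union_left) e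
      (hT.trans (Set.union_subset (hΓSH.trans Set.subset_union_right) Set.subset_union_left))
  have hlow := sub_le_l2norm_restr_of_head hcH0.le hrΩ hnoise (hhead _ hΩ)
  rcases (show α₀ ≤ 1 by nlinarith).lt_or_eq with hα₀1 | rfl
  · refine le_sqrt_one_sub_sq_mul_add hα₀pos hα₀1 (by rw [hβ₀]; positivity) (l2norm_nonneg r)
      (l2norm_nonneg e) (l2norm_sq_eq_restr_add_restr_compl r Γ) ?_
    rw [hα₀, hβ₀]
    linear_combination hlow
  · obtain ⟨rfl, rfl⟩ : δ = 0 ∧ cH = 1 := by constructor <;> nlinarith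
    have htail := l2norm_restr_compl_le_of_head hrΩ hnoise (by simpa using hhead _ hΩ)
    norm_num [hβ₀] at htail ⊢
    linarith

theorem stmt0 {n m : ℕ}
    (M MT MH : Set (Set (Fin n)))
    (δ cH : ℝ) (hδ0 : 0 ≤ δ) (hδ1 : δ < 1) (hcH0 : 0 < cH) (hcH1 : cH ≤ 1)
    (α₀ β₀ : ℝ) (hα₀ : α₀ = cH * (1 - δ) - δ) (hα₀pos : 0 < α₀)
    (hβ₀ : β₀ = (1 + cH) * Real.sqrt (1 + δ))
    (A : Matrix (Fin m) (Fin n) ℝ)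
    (hA : hasModelRIP A δ (modelSum (modelSum M MT) MH))
    (x xi : Fin n → ℝ)
    (hx : Function.support x ∈ modelPlus M)
    (hxi : Function.support xi ∈ modelPlus MT)
    (e : Fin m → ℝ)
    (r : Fin n → ℝ) (hr : r = x - xi)
    (b : Fin n → ℝ) (hb : b = A.transpose.mulVec (A.mulVec r + e))
    (Γ : Set (Fin n)) (hΓ : Γ ∈ modelPlus MH)
    (hhead : ∀ Ω ∈ modelSum MT M, l2norm (restr b Γ) ≥ cH * l2norm (restr b Ω)) :
    l2norm (restr r Γᶜ) ≤ Real.sqrt (1 - α₀ ^ 2) * l2norm r +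
      (β₀ / α₀ + α₀ * β₀ / Real.sqrt (1 - α₀ ^ 2)) * l2norm e :=
  stmt0_general M MT MH δ cH hδ0 hcH0 hcH1 α₀ β₀ hα₀ hα₀pos hβ₀ A hA x xi hx hxi e r hr b hb Γ hΓ
    hhead
end

section
/- Let 𝕄 and 𝕄_H be structured sparsity models on {1,…,n} with 𝕄 nonempty, let p ≥ 1 and 0 < c_H ≤ 1, and let H : ℝⁿ → 𝒫({1,…,n}) satisfy: H(y) ∈ 𝕄_H⁺ and ‖y_{H(y)}‖_p ≥ c_H·‖y_Ω‖_p for every y ∈ ℝⁿ and every Ω ∈ 𝕄. Fix x ∈ ℝⁿ and t ∈ ℕ, and define Ω₀ = ∅ and Ω_i = Ω_{i−1} ∪ H(x_{Ω_{i−1}ᶜ}) for i = 1,…,t (where x_{Ω^c} denotes x with coordinates in Ω set to zero). Then Ω_t ∈ (𝕄_H^{⊕t})⁺ and ‖x_{Ω_t}‖_p ≥ (1 − (1 − c_H^p)^t)^{1/p} · max_{Ω ∈ 𝕄} ‖x_Ω‖_p. -/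
/-- The ℓ_p norm of a vector in ℝⁿ (for real `p ≥ 1`). -/
noncomputable def lpnorm {k : ℕ} (p : ℝ) (x : Fin k → ℝ) : ℝ := (∑ i, |x i| ^ p) ^ (1 / p)

/-- The `t`-fold sum `M ⊕ ⋯ ⊕ M` of a structured sparsity model with itself. -/
def iterSum {k : ℕ} (M : Set (Set (Fin k))) : ℕ → Set (Set (Fin k))
  | 0 => {∅}
  | t + 1 => modelSum (iterSum M t) M

/-!
Track the `p`-th power of the norm, the mass `∑_{i ∈ A} |x i|^p`, which is additive over disjoint
sets. Since `H` only sees `x` outside `Ωᵢ`, its guarantee raised to the power `p` says that the new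
set captures at least a `c_H^p` fraction of the mass of `Ω \ Ωᵢ`. Hence the mass of `Ω` not yet
covered shrinks by the factor `1 - c_H^p` in every round.
-/

noncomputable def mass {ι : Type*} [Fintype ι] (w : ι → ℝ) (A : Set ι) : ℝ :=
  ∑ i, A.indicator w i

section Mass

variable {ι : Type*} [Fintype ι] {w : ι → ℝ}

@[simp]
lemma mass_empty : mass w ∅ = 0 := by
  simp [mass]

lemma mass_nonneg (hw : 0 ≤ w) (A : Set ι) : 0 ≤ mass w A :=
  Finset.sum_nonneg fun i _ => Set.indicator_nonneg (fun i _ => hw i) i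

lemma mass_mono (hw : 0 ≤ w) {A B : Set ι} (h : A ⊆ B) : mass w A ≤ mass w B :=
  Finset.sum_le_sum fun i _ => Set.indicator_le_indicator_of_subset h hw i

lemma mass_union_of_disjoint {A B : Set ι} (h : Disjoint A B) :
    mass w (A ∪ B) = mass w A + mass w B := by
  simp only [mass, Set.indicator_union_of_disjoint h, Finset.sum_add_distrib]

lemma mass_union_eq_add_sdiff (A B : Set ι) :
    mass w (A ∪ B) = mass w A + mass w (B \ A) := by
  rw [← mass_union_of_disjoint Set.disjoint_sdiff_right, Set.union_sdiff_self]

lemma mass_eq_inter_add_sdiff (A B : Set ι) :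
    mass w A = mass w (A ∩ B) + mass w (A \ B) := by
  rw [← mass_union_of_disjoint Set.disjoint_sdiff_inter.symm, Set.inter_union_sdiff]

lemma mass_sub_union_le (hw : 0 ≤ w) {q : ℝ} (hq : 0 ≤ q) {Ω A Γ : Set ι}
    (hΓ : q * mass w (Ω \ A) ≤ mass w (Γ \ A)) :
    mass w Ω - mass w (A ∪ Γ) ≤ (1 - q) * (mass w Ω - mass w A) := by
  have hsplit := mass_eq_inter_add_sdiff (w := w) Ω A
  have hinter : mass w (Ω ∩ A) ≤ mass w A := mass_mono hw Set.inter_subset_right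
  have hscaled : q * (mass w Ω - mass w A) ≤ q * mass w (Ω \ A) :=
    mul_le_mul_of_nonneg_left (by linarith) hq
  rw [mass_union_eq_add_sdiff]
  linarith

end Mass

lemma restr_restr_compl {k : ℕ} (x : Fin k → ℝ) (A S : Set (Fin k)) :
    restr (restr x Aᶜ) S = restr x (S \ A) := by
  simp only [restr, Set.indicator_indicator, Set.sdiff_eq]

lemma lpnorm_restr {k : ℕ} {p : ℝ} (hp : p ≠ 0) (x : Fin k → ℝ) (Ω : Set (Fin k)) :
    lpnorm p (restr x Ω) = mass (fun i => |x i| ^ p) Ω ^ (1 / p) := by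
  refine congrArg (· ^ (1 / p)) (Finset.sum_congr rfl fun i _ => ?_)
  by_cases h : i ∈ Ω <;> simp [restr, h, Real.zero_rpow hp]

lemma mul_rpow_one_div_le_iff {a b c p : ℝ} (ha : 0 ≤ a) (hb : 0 ≤ b) (hc : 0 ≤ c)
    (hp : 0 < p) : c * a ^ (1 / p) ≤ b ^ (1 / p) ↔ c ^ p * a ≤ b := by
  have hcp : c = (c ^ p) ^ (1 / p) := by rw [one_div, Real.rpow_rpow_inv hc hp.ne']
  rw [hcp, ← Real.mul_rpow (by positivity) ha, ← hcp,
    Real.rpow_le_rpow_iff (by positivity) hb (by positivity)]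

lemma union_mem_modelPlus_modelSum {k : ℕ} {M₁ M₂ : Set (Set (Fin k))} {A B : Set (Fin k)}
    (hA : A ∈ modelPlus M₁) (hB : B ∈ modelPlus M₂) : A ∪ B ∈ modelPlus (modelSum M₁ M₂) := by
  obtain ⟨S₁, hS₁, hAS₁⟩ := hA
  obtain ⟨S₂, hS₂, hBS₂⟩ := hB
  exact ⟨S₁ ∪ S₂, ⟨S₁, hS₁, S₂, hS₂, rfl⟩, Set.union_subset_union hAS₁ hBS₂⟩

lemma mem_modelPlus_iterSum {k : ℕ} {M : Set (Set (Fin k))} {Om : ℕ → Set (Fin k)}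
    (h0 : Om 0 = ∅) (hsucc : ∀ i, ∃ Γ ∈ modelPlus M, Om (i + 1) = Om i ∪ Γ) :
    ∀ t, Om t ∈ modelPlus (iterSum M t)
  | 0 => ⟨∅, rfl, h0.subset⟩
  | t + 1 => by
    obtain ⟨Γ, hΓ, hOm⟩ := hsucc t
    rw [hOm]
    exact union_mem_modelPlus_modelSum (mem_modelPlus_iterSum h0 hsucc t) hΓ

theorem stmt6_general {n : ℕ} (M MH : Set (Set (Fin n)))
    (p cH : ℝ) (hp : 1 ≤ p) (hcH0 : 0 < cH) (hcH1 : cH ≤ 1)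
    (H : (Fin n → ℝ) → Set (Fin n))
    (hH1 : ∀ y, H y ∈ modelPlus MH)
    (hH2 : ∀ y : Fin n → ℝ, ∀ Ω ∈ M, lpnorm p (restr y (H y)) ≥ cH * lpnorm p (restr y Ω))
    (x : Fin n → ℝ) (t : ℕ)
    (Om : ℕ → Set (Fin n)) (hOm0 : Om 0 = ∅)
    (hOm : ∀ i, Om (i + 1) = Om i ∪ H (restr x (Om i)ᶜ)) :
    Om t ∈ modelPlus (iterSum MH t) ∧
    ∀ Ω ∈ M, lpnorm p (restr x (Om t)) ≥
      (1 - (1 - cH ^ p) ^ t) ^ (1 / p) * lpnorm p (restr x Ω) := by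
  refine ⟨mem_modelPlus_iterSum hOm0 (fun i => ⟨_, hH1 _, hOm i⟩) t, fun Ω hΩ => ?_⟩
  have hp0 : 0 < p := by linarith
  set w : Fin n → ℝ := fun i => |x i| ^ p
  have hw : 0 ≤ w := fun i => by positivity
  have hq0 : 0 ≤ cH ^ p := by positivity
  have hq1 : cH ^ p ≤ 1 := Real.rpow_le_one hcH0.le hcH1 hp0.le
  have hround (i : ℕ) :
      mass w Ω - mass w (Om (i + 1)) ≤ (1 - cH ^ p) * (mass w Ω - mass w (Om i)) := by
    have hhead := hH2 (restr x (Om i)ᶜ) Ω hΩ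
    rw [ge_iff_le, restr_restr_compl, restr_restr_compl, lpnorm_restr hp0.ne',
      lpnorm_restr hp0.ne', mul_rpow_one_div_le_iff (mass_nonneg hw _) (mass_nonneg hw _)
      hcH0.le hp0] at hhead
    rw [hOm i]
    exact mass_sub_union_le hw hq0 hhead
  have hdecay := le_geom (u := fun i => mass w Ω - mass w (Om i)) (sub_nonneg.2 hq1) t
    fun i _ => hround i
  simp only [hOm0, mass_empty, sub_zero] at hdecay
  have hfrac : 0 ≤ 1 - (1 - cH ^ p) ^ t :=
    sub_nonneg.2 (pow_le_one₀ (by linarith) (by linarith))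
  rw [ge_iff_le, lpnorm_restr hp0.ne', lpnorm_restr hp0.ne',
    mul_rpow_one_div_le_iff (mass_nonneg hw _) (mass_nonneg hw _) (by positivity) hp0,
    one_div, Real.rpow_inv_rpow hfrac hp0.ne']
  linarith

theorem stmt6 {n : ℕ} (M MH : Set (Set (Fin n))) (hM : M.Nonempty)
    (p cH : ℝ) (hp : 1 ≤ p) (hcH0 : 0 < cH) (hcH1 : cH ≤ 1)
    (H : (Fin n → ℝ) → Set (Fin n))
    (hH1 : ∀ y, H y ∈ modelPlus MH)
    (hH2 : ∀ y : Fin n → ℝ, ∀ Ω ∈ M, lpnorm p (restr y (H y)) ≥ cH * lpnorm p (restr y Ω))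
    (x : Fin n → ℝ) (t : ℕ)
    (Om : ℕ → Set (Fin n)) (hOm0 : Om 0 = ∅)
    (hOm : ∀ i, Om (i + 1) = Om i ∪ H (restr x (Om i)ᶜ)) :
    Om t ∈ modelPlus (iterSum MH t) ∧
    ∀ Ω ∈ M, lpnorm p (restr x (Om t)) ≥
      (1 - (1 - cH ^ p) ^ t) ^ (1 / p) * lpnorm p (restr x Ω) :=
  stmt6_general M MH p cH hp hcH0 hcH1 H hH1 hH2 x t Om hOm0 hOm
end

section
/- Let h, w, s, B ∈ ℕ with s ≤ h, and set k = s·w. Then the number of supports in the CEMD model satisfies |𝕄_{k,B}| ≤ C(h,s)·C(B+k,k)·2^k, where C(a,b) denotes the binomial coefficient. -/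
/-- The Earth Mover's Distance between two finite sets of naturals of equal
cardinality: the minimum, over bijections `π` from `A` onto `B`, of
`∑ a ∈ A, |a - π a|`. -/
noncomputable def natEMD (A B : Finset ℕ) : ℕ :=
  sInf { d : ℕ | ∃ π : ℕ → ℕ, Set.BijOn π ↑A ↑B ∧
    d = ∑ a ∈ A, ((a : ℤ) - (π a : ℤ)).natAbs }

/-- The support of column `c` of a matrix support `Ω`: the set of rows `r`
with `(r, c) ∈ Ω`. -/
def colSupp {h w : ℕ} (Ω : Finset (Fin h × Fin w)) (c : ℕ) : Finset ℕ :=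
  (Ω.filter (fun q => (q.2 : ℕ) = c)).image (fun q => (q.1 : ℕ))

/-- The support-EMD of a matrix support `Ω` (with exactly `s` entries per
column): the sum of the EMDs of consecutive column supports. -/
noncomputable def suppEMD {h w : ℕ} (Ω : Finset (Fin h × Fin w)) : ℕ :=
  ∑ c ∈ Finset.range (w - 1), natEMD (colSupp Ω c) (colSupp Ω (c + 1))

/-- The Constrained EMD model `𝕄_{k,B}` with column sparsity `s = k/w` and
EMD budget `B`: supports in the `h × w` grid with exactly `s` entries per
column and support-EMD at most `B`. -/
noncomputable def cemdModel (h w s B : ℕ) : Set (Finset (Fin h × Fin w)) :=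
  { Ω | (∀ c < w, (colSupp Ω c).card = s) ∧ suppEMD Ω ≤ B }

/-!
A support in the model is determined by its first column, an `s`-subset of the `h` rows, together
with an EMD-optimal matching between each pair of consecutive columns, recorded as the integer
displacements of the entries of a column taken in increasing order. These `(w - 1) s ≤ k`
displacements form an integer vector whose `ℓ¹`-norm is the support-EMD, hence at most `B`.
Such a vector of length `n` is determined by its signs and by its absolute values, which
together with a slack coordinate form a weak composition of `B` into `n + 1` parts; this gives
at most `C(B + n, n) · 2 ^ n ≤ C(B + k, k) · 2 ^ k` codes.
-/

open Finset

theorem card_piAntidiag_univ (ι : Type*) [Fintype ι] [DecidableEq ι] (n : ℕ) :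
    #(piAntidiag (univ : Finset ι) n) = (Fintype.card ι + n - 1).choose n := by
  rw [← map_sym_eq_piAntidiag, card_map, sym_univ, card_univ, Sym.card_sym_eq_choose]

noncomputable def intL1Ball (ι : Type*) [Fintype ι] [DecidableEq ι] (B : ℕ) :
    Finset (ι → ℤ) :=
  {δ ∈ Fintype.piFinset fun _ => Icc (-B : ℤ) B | ∑ i, (δ i).natAbs ≤ B}

theorem mem_intL1Ball {ι : Type*} [Fintype ι] [DecidableEq ι] {B : ℕ} {δ : ι → ℤ} :
    δ ∈ intL1Ball ι B ↔ ∑ i, (δ i).natAbs ≤ B := by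
  refine ⟨fun hδ => (mem_filter.1 hδ).2, fun hδ => mem_filter.2 ⟨?_, hδ⟩⟩
  refine Fintype.mem_piFinset.2 fun i => mem_Icc.2 ?_
  have := (single_le_sum (fun j _ => Nat.zero_le _) (mem_univ i)).trans hδ
  omega

theorem card_intL1Ball_le (ι : Type*) [Fintype ι] [DecidableEq ι] (B : ℕ) :
    #(intL1Ball ι B) ≤ (B + Fintype.card ι).choose (Fintype.card ι) * 2 ^ Fintype.card ι := by
  have hinj : #(intL1Ball ι B) ≤
      #(piAntidiag (univ : Finset (Option ι)) B ×ˢ (univ : Finset (ι → Bool))) := by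
    refine card_le_card_of_injOn
      (fun δ => (fun o => o.elim (B - ∑ i, (δ i).natAbs) (fun i => (δ i).natAbs),
        fun i => decide (0 ≤ δ i))) (fun δ hδ => ?_) (fun δ _ δ' _ hδδ' => ?_)
    · refine mem_product.2 ⟨mem_piAntidiag.2 ⟨?_, fun _ _ => mem_univ _⟩, mem_univ _⟩
      have := mem_intL1Ball.1 hδ
      simp only [Fintype.sum_option, Option.elim_none, Option.elim_some]
      omega
    · funext i
      have habs := congrFun (congrArg Prod.fst hδδ') (some i)
      have hsign := congrFun (congrArg Prod.snd hδδ') i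
      simp only [Option.elim_some, decide_eq_decide] at habs hsign
      omega
  rwa [card_product, card_piAntidiag_univ, card_univ, Fintype.card_option, Fintype.card_fun,
    Fintype.card_bool, Nat.add_right_comm, Nat.add_sub_cancel, add_comm,
    Nat.choose_symm_add] at hinj

theorem exists_bijOn_natEMD_eq {A B : Finset ℕ} (hAB : #A = #B) :
    ∃ π : ℕ → ℕ, Set.BijOn π A B ∧
      natEMD A B = ∑ a ∈ A, ((a : ℤ) - π a).natAbs := by
  obtain ⟨π, hπ⟩ := A.finite_toSet.exists_bijOn_of_encard_eq (t := (B : Set ℕ))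
    (by simp only [Set.encard_coe_eq_coe_finsetCard, hAB])
  exact Nat.sInf_mem (s := {d | ∃ π : ℕ → ℕ, Set.BijOn π A B ∧ d = _})
    ⟨_, π, hπ, rfl⟩

theorem bijOn_nth_mem {A : Finset ℕ} {s : ℕ} (hA : #A = s) :
    Set.BijOn (fun i : Fin s => Nat.nth (· ∈ A) i) Set.univ A := by
  have hcard : #A.finite_toSet.toFinset = s := by simpa using hA
  have hnth : Set.BijOn (Nat.nth (· ∈ A)) (Set.Iio s) A := by
    have h1 := (Nat.nth_injOn A.finite_toSet).bijOn_image
    rwa [Nat.image_nth_Iio_card, hcard] at h1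
  have hval : Set.BijOn (fun i : Fin s => (i : ℕ)) Set.univ (Set.Iio s) :=
    ⟨fun i _ => i.isLt, Fin.val_injective.injOn,
      fun n hn => ⟨⟨n, hn⟩, trivial, rfl⟩⟩
  exact hnth.comp hval

noncomputable def displace (A : Finset ℕ) {s : ℕ} (δ : Fin s → ℤ) : Finset ℕ :=
  univ.image fun i : Fin s => ((Nat.nth (· ∈ A) i : ℤ) + δ i).toNat

theorem exists_displace_eq {A B : Finset ℕ} {s : ℕ} (hA : #A = s) (hB : #B = s) :
    ∃ δ : Fin s → ℤ, displace A δ = B ∧ ∑ i, (δ i).natAbs = natEMD A B := by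
  obtain ⟨π, hπ, hemd⟩ := exists_bijOn_natEMD_eq (hA.trans hB.symm)
  have he := bijOn_nth_mem hA
  refine ⟨fun i => π (Nat.nth (· ∈ A) i) - Nat.nth (· ∈ A) i, ?_, ?_⟩
  · apply coe_injective
    simpa [displace, Function.comp_def] using (hπ.comp he).image_eq
  · rw [hemd]
    refine sum_nbij (fun i => Nat.nth (· ∈ A) i) (fun i _ => he.mapsTo trivial)
      (by simpa using he.injOn) (by simpa using he.surjOn) (fun i _ => ?_)
    dsimp only
    omega

theorem mem_colSupp {h w : ℕ} {Ω : Finset (Fin h × Fin w)} {q : Fin h × Fin w} :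
    (q.1 : ℕ) ∈ colSupp Ω q.2 ↔ q ∈ Ω := by
  simp only [colSupp, mem_image, mem_filter]
  constructor
  · rintro ⟨p, ⟨hp, hp2⟩, hp1⟩
    rwa [← Prod.ext (Fin.ext hp1) (Fin.ext hp2)]
  · exact fun hq => ⟨q, ⟨hq, rfl⟩, rfl⟩

theorem colSupp_subset_range {h w : ℕ} (Ω : Finset (Fin h × Fin w)) (c : ℕ) :
    colSupp Ω c ⊆ range h := by
  intro r hr
  obtain ⟨p, -, rfl⟩ := mem_image.1 hr
  exact mem_range.2 p.1.isLt

theorem eq_of_forall_colSupp_eq {h w : ℕ} {Ω Ω' : Finset (Fin h × Fin w)}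
    (H : ∀ c < w, colSupp Ω c = colSupp Ω' c) : Ω = Ω' := by
  ext q
  rw [← mem_colSupp, ← mem_colSupp, H q.2 q.2.isLt]

def IsDisplacementCode {h w s : ℕ} (Ω : Finset (Fin h × Fin w)) (A : Finset ℕ)
    (δ : Fin (w - 1) × Fin s → ℤ) : Prop :=
  colSupp Ω 0 = A ∧
    ∀ c : Fin (w - 1), colSupp Ω (c + 1) = displace (colSupp Ω c) (δ ⟨c, ·⟩)

theorem IsDisplacementCode.eq {h w s : ℕ} {Ω Ω' : Finset (Fin h × Fin w)} {A : Finset ℕ}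
    {δ : Fin (w - 1) × Fin s → ℤ} (hΩ : IsDisplacementCode Ω A δ)
    (hΩ' : IsDisplacementCode Ω' A δ) : Ω = Ω' := by
  refine eq_of_forall_colSupp_eq fun c hc => ?_
  induction c with
  | zero => rw [hΩ.1, hΩ'.1]
  | succ c ih =>
    have hc' : c < w - 1 := by omega
    rw [hΩ.2 ⟨c, hc'⟩, hΩ'.2 ⟨c, hc'⟩, ih (by omega)]

theorem exists_isDisplacementCode {h w s B : ℕ} {Ω : Finset (Fin h × Fin w)}
    (hΩ : Ω ∈ cemdModel h w s B) :
    ∃ δ ∈ intL1Ball (Fin (w - 1) × Fin s) B, IsDisplacementCode Ω (colSupp Ω 0) δ := by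
  have hstep : ∀ c : Fin (w - 1), ∃ δ : Fin s → ℤ,
      displace (colSupp Ω c) δ = colSupp Ω (c + 1) ∧
        ∑ i, (δ i).natAbs = natEMD (colSupp Ω c) (colSupp Ω (c + 1)) := fun c =>
    exists_displace_eq (hΩ.1 c (by omega)) (hΩ.1 (c + 1) (by omega))
  choose δ hδ hsum using hstep
  refine ⟨fun p => δ p.1 p.2, mem_intL1Ball.2 ?_, rfl, fun c => (hδ c).symm⟩
  calc ∑ p : Fin (w - 1) × Fin s, (δ p.1 p.2).natAbs
      = ∑ c : Fin (w - 1), natEMD (colSupp Ω c) (colSupp Ω (c + 1)) := by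
        rw [Fintype.sum_prod_type]; exact Fintype.sum_congr _ _ hsum
    _ = suppEMD Ω :=
        Fin.sum_univ_eq_sum_range (fun c => natEMD (colSupp Ω c) (colSupp Ω (c + 1))) _
    _ ≤ B := hΩ.2

theorem ncard_cemdModel_le {h w s B : ℕ} (hw : 0 < w) :
    (cemdModel h w s B).ncard ≤ h.choose s * #(intL1Ball (Fin (w - 1) × Fin s) B) := by
  classical
  calc (cemdModel h w s B).ncard = #(cemdModel h w s B).toFinset := Set.ncard_eq_toFinset_card' _
    _ ≤ #((range h).powersetCard s ×ˢ intL1Ball (Fin (w - 1) × Fin s) B) := by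
      refine card_le_card_of_forall_subsingleton
        (fun Ω code => IsDisplacementCode Ω code.1 code.2) (fun Ω hΩ => ?_)
        (fun code _ Ω hΩ Ω' hΩ' => by exact hΩ.2.eq hΩ'.2)
      rw [Set.mem_toFinset] at hΩ
      obtain ⟨δ, hδ, hcode⟩ := exists_isDisplacementCode hΩ
      exact ⟨(colSupp Ω 0, δ), mem_product.2
        ⟨mem_powersetCard.2 ⟨colSupp_subset_range Ω 0, hΩ.1 0 hw⟩, hδ⟩, hcode⟩
    _ = h.choose s * #(intL1Ball (Fin (w - 1) × Fin s) B) := by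
      rw [card_product, card_powersetCard, card_range]

theorem choose_add_le_choose_add {B m n : ℕ} (hmn : m ≤ n) :
    (B + m).choose m ≤ (B + n).choose n := by
  rw [← Nat.choose_symm_add, ← Nat.choose_symm_add (a := B)]
  exact Nat.choose_le_choose B (by omega)

theorem stmt9 (h w s B k : ℕ) (hs : s ≤ h) (hk : k = s * w) :
    (cemdModel h w s B).ncard ≤ h.choose s * (B + k).choose k * 2 ^ k := by
  obtain rfl | hw := Nat.eq_zero_or_pos w
  · calc (cemdModel h 0 s B).ncard ≤ 1 := Set.ncard_le_one_of_subsingleton _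
      _ ≤ h.choose s * (B + k).choose k * 2 ^ k :=
        Nat.mul_pos (Nat.mul_pos (Nat.choose_pos hs) (Nat.choose_pos (Nat.le_add_left k B)))
          (Nat.two_pow_pos k)
  have hlen : (w - 1) * s ≤ k := by
    rw [hk, mul_comm]; exact Nat.mul_le_mul_left s (Nat.sub_le w 1)
  calc (cemdModel h w s B).ncard ≤ h.choose s * #(intL1Ball (Fin (w - 1) × Fin s) B) :=
        ncard_cemdModel_le hw
    _ ≤ h.choose s * ((B + (w - 1) * s).choose ((w - 1) * s) * 2 ^ ((w - 1) * s)) := by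
        gcongr; simpa using card_intL1Ball_le (Fin (w - 1) × Fin s) B
    _ ≤ h.choose s * ((B + k).choose k * 2 ^ k) := by
        gcongr
        · exact choose_add_le_choose_add hlen
        · norm_num
    _ = h.choose s * (B + k).choose k * 2 ^ k := (mul_assoc _ _ _).symm
end

section
/- Let X ∈ ℝ^{h×w}, p ≥ 1, let k be a multiple of w with s = k/w ≤ h, let B ∈ ℕ, and let H_s = Σ_{i=1}^s 1/i. Define X^(1) = X and, for i = 1,…,s: let r_i be a path maximizing the weight w_{X^(i),p}(r) among all paths r with EMD(r) ≤ ⌊B/i⌋, and let X^(i+1) equal X^(i) except that the entries at the locations of r_i are set to 0. Let Ω = r_1 ∪ ⋯ ∪ r_s. Then Ω ∈ 𝕄⁺_{k, ⌈H_s⌉·B} and ‖X_Ω‖_p^p ≥ (1/4)·max_{Γ ∈ 𝕄_{k,B}} ‖X_Γ‖_p^p. -/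
/-- The entrywise ℓ_p norm of a matrix (for real `p ≥ 1`). -/
noncomputable def matLpNorm {h w : ℕ} (p : ℝ) (X : Matrix (Fin h) (Fin w) ℝ) : ℝ :=
  (∑ r, ∑ c, |X r c| ^ p) ^ (1 / p)

/-- `X_Ω`: the matrix `X` with all entries outside `Ω` set to zero. -/
def matRestrict {h w : ℕ} (X : Matrix (Fin h) (Fin w) ℝ)
    (Ω : Finset (Fin h × Fin w)) : Matrix (Fin h) (Fin w) ℝ :=
  Matrix.of fun r c => if (r, c) ∈ Ω then X r c else 0

/-- The support of a path `q` (one location per column, in row `q j` for column `j`). -/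
def pathSupp {h w : ℕ} (q : ℕ → Fin h) : Finset (Fin h × Fin w) :=
  Finset.univ.image (fun j : Fin w => (q j, j))

/-- The weight of a path: the sum of `|X_{q(j),j}|^p` over the columns `j`. -/
noncomputable def pathWeight {h w : ℕ} (p : ℝ) (X : Matrix (Fin h) (Fin w) ℝ)
    (q : ℕ → Fin h) : ℝ :=
  ∑ j : Fin w, |X (q j) j| ^ p

/-- The EMD of a path: the sum of the vertical moves between consecutive columns. -/
def pathEMD {h : ℕ} (q : ℕ → Fin h) (w : ℕ) : ℕ :=
  ∑ j ∈ Finset.range (w - 1), ((q j : ℤ) - (q (j + 1) : ℤ)).natAbs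

/-!
The greedy paths have EMDs at most `B / i`, hence at most `H_s B` in total, but they may overlap.
Encode a column by the counting function `r ↦ #{rows < r}`: an `s`-element set of rows is one that
grows by at most one per step. Padding the multiset of path rows of each column to such a function
by successive L¹ projections, starting from a closest padding at whichever end column admits the
closer one, does not increase the total L¹ distance between consecutive counting functions, and
that distance dominates the EMD of the padded columns (match the `k`-th rows).

Conversely, a support `Γ ∈ 𝕄_{k,B}` splits along optimal matchings into `s` disjoint paths; sorted
by decreasing EMD, the `i`-th has EMD at most `B / i` and so competes with the `i`-th greedy path.
What the greedy step misses of it already lies in `Ω`, whence `‖X_Γ‖_p^p ≤ 2 ‖X_Ω‖_p^p`.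
-/

namespace HeadApprox

open Finset

theorem card_filter_range_xor_const_lt {n a b : ℕ} (ha : a < n) (hb : b < n) :
    #{r ∈ range n | Xor (a < r) (b < r)} = ((a : ℤ) - b).natAbs := by
  have : {r ∈ range n | Xor (a < r) (b < r)} = Ioc (min a b) (max a b) := by
    ext r; simp [Xor]; omega
  rw [this, Nat.card_Ioc]; omega

theorem card_filter_range_xor_lt_const {n a b : ℕ} (ha : a ≤ n) (hb : b ≤ n) :
    #{k ∈ range n | Xor (k < a) (k < b)} = ((a : ℤ) - b).natAbs := by
  have : {k ∈ range n | Xor (k < a) (k < b)} = Ico (min a b) (max a b) := by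
    ext k; simp [Xor]; omega
  rw [this, Nat.card_Ico]; omega

theorem natEMD_le_of_bijOn {A B : Finset ℕ} {s : ℕ} {u v : ℕ → ℕ}
    (hu : Set.BijOn u (range s) A) (hv : Set.BijOn v (range s) B) :
    natEMD A B ≤ ∑ k ∈ range s, ((u k : ℤ) - v k).natAbs := by
  have hinv := hu.invOn_invFunOn
  have hπ := hv.comp (hu.symm hinv.symm)
  calc natEMD A B ≤ ∑ a ∈ A, ((a : ℤ) - (v ∘ Function.invFunOn u (range s)) a).natAbs :=
        Nat.sInf_le ⟨_, hπ, rfl⟩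
    _ = ∑ k ∈ range s, ((u k : ℤ) - v k).natAbs := by
        refine (sum_nbij u (fun k hk => hu.mapsTo hk) hu.injOn hu.surjOn fun k hk => ?_).symm
        rw [Function.comp_apply, hinv.1 hk]

theorem exists_bijOn_natEMD_eq {A B : Finset ℕ} (hAB : #A = #B) :
    ∃ π : ℕ → ℕ, Set.BijOn π A B ∧ ∑ a ∈ A, ((a : ℤ) - π a).natAbs = natEMD A B := by
  obtain ⟨π, hπ⟩ : ∃ π : ℕ → ℕ, Set.BijOn π A B :=
    A.finite_toSet.exists_bijOn_of_encard_eq (by simp [Set.encard_coe_eq_coe_finsetCard, hAB])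
  obtain ⟨π, hπ, hsum⟩ := Nat.sInf_mem (⟨_, π, hπ, rfl⟩ : {d : ℕ | ∃ π : ℕ → ℕ,
    Set.BijOn π A B ∧ d = ∑ a ∈ A, ((a : ℤ) - π a).natAbs}.Nonempty)
  exact ⟨π, hπ, hsum.symm⟩

/-- `F r` counts the elements `< r` of a multiset of `s` rows in `[0, h)`. -/
structure IsMultisetCdf (h s : ℕ) (F : ℕ → ℕ) : Prop where
  zero : F 0 = 0
  mono : Monotone F
  top : ∀ r, h ≤ r → F r = s

structure IsSetCdf (h s : ℕ) (F : ℕ → ℕ) : Prop extends IsMultisetCdf h s F where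
  succ_le : ∀ r, F (r + 1) ≤ F r + 1

def jump (G : ℕ → ℕ) (r : ℕ) : ℕ := if G r < G (r + 1) then 1 else 0

/-- The set counted by `F` contains the support of the multiset counted by `G`. -/
structure IsPadding (h s : ℕ) (G F : ℕ → ℕ) : Prop extends IsSetCdf h s F where
  lt_succ_of_lt_succ : ∀ r, G r < G (r + 1) → F r < F (r + 1)

def cdfDist (h : ℕ) (F G : ℕ → ℕ) : ℕ := ∑ r ∈ range h, ((F r : ℤ) - G r).natAbs

theorem cdfDist_comm (h : ℕ) (F G : ℕ → ℕ) : cdfDist h F G = cdfDist h G F :=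
  sum_congr rfl fun _ _ => by omega

theorem cdfDist_triangle (h : ℕ) (F G K : ℕ → ℕ) :
    cdfDist h F K ≤ cdfDist h F G + cdfDist h G K := by
  rw [cdfDist, cdfDist, cdfDist, ← sum_add_distrib]
  exact sum_le_sum fun _ _ => by omega

theorem jump_le_one (G : ℕ → ℕ) (r : ℕ) : jump G r ≤ 1 := by
  unfold jump; split_ifs <;> omega

theorem add_jump_le {G : ℕ → ℕ} (hG : Monotone G) (r : ℕ) : G r + jump G r ≤ G (r + 1) := by
  have := hG r.le_succ
  unfold jump; split_ifs <;> omega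

theorem IsMultisetCdf.jump_eq_zero {h s : ℕ} {G : ℕ → ℕ} (hG : IsMultisetCdf h s G) {r : ℕ}
    (hr : h ≤ r) : jump G r = 0 := by
  rw [jump, if_neg (by rw [hG.top r hr, hG.top (r + 1) (by omega)]; omega)]

section Projection

variable {h s : ℕ} {F G : ℕ → ℕ}

def lowerEnv (h : ℕ) (F G : ℕ → ℕ) (r : ℕ) : ℕ :=
  if h ≤ r then min (F r) (G r) else max (min (F r) (G r)) (lowerEnv h F G (r + 1) - 1)
termination_by h - r

def upperEnv (h : ℕ) (F G : ℕ → ℕ) (r : ℕ) : ℕ :=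
  if h ≤ r then max (F r) (G r) else min (max (F r) (G r)) (upperEnv h F G (r + 1) - jump G r)
termination_by h - r

/-- `lowerEnv` is the least function above `min F G` growing by at most one per step, `upperEnv`
the greatest below `max F G` growing wherever `G` jumps. Climbing greedily along `lowerEnv` while
taking every jump of `G` never leaves the band between them. -/
def project (h : ℕ) (F G : ℕ → ℕ) : ℕ → ℕ
  | 0 => 0
  | r + 1 => max (lowerEnv h F G (r + 1)) (project h F G r + jump G r)

theorem min_le_lowerEnv (r : ℕ) : min (F r) (G r) ≤ lowerEnv h F G r := by
  rw [lowerEnv]; split_ifs <;> omega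

theorem lowerEnv_le (hF : ∀ r, F (r + 1) ≤ F r + 1) (r : ℕ) : lowerEnv h F G r ≤ F r := by
  rw [lowerEnv]
  split_ifs with hr
  · exact min_le_left _ _
  · have := lowerEnv_le hF (r + 1)
    have := hF r
    omega
termination_by h - r

theorem lowerEnv_succ_le (hF : IsSetCdf h s F) (hG : IsMultisetCdf h s G) (r : ℕ) :
    lowerEnv h F G (r + 1) ≤ lowerEnv h F G r + 1 := by
  rw [lowerEnv.eq_1 h F G r]
  split_ifs with hr
  · rw [lowerEnv, if_pos (by omega), hF.top r hr, hG.top r hr, hF.top (r + 1) (by omega),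
      hG.top (r + 1) (by omega)]
    omega
  · omega

theorem upperEnv_le (r : ℕ) : upperEnv h F G r ≤ max (F r) (G r) := by
  rw [upperEnv]; split_ifs <;> omega

theorem le_upperEnv (hG : Monotone G) (r : ℕ) : G r ≤ upperEnv h F G r := by
  rw [upperEnv]
  split_ifs with hr
  · exact le_max_right _ _
  · have := le_upperEnv hG (r + 1)
    have := add_jump_le hG r
    omega
termination_by h - r

theorem upperEnv_add_jump_le (hF : IsSetCdf h s F) (hG : IsMultisetCdf h s G) (r : ℕ) :
    upperEnv h F G r + jump G r ≤ upperEnv h F G (r + 1) := by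
  have := le_upperEnv (h := h) (F := F) hG.mono (r + 1)
  have := add_jump_le hG.mono r
  rw [upperEnv.eq_1 h F G r]
  split_ifs with hr
  · rw [upperEnv, if_pos (by omega), hF.top r hr, hG.top r hr, hF.top (r + 1) (by omega),
      hG.top (r + 1) (by omega), hG.jump_eq_zero hr]
    omega
  · omega

theorem lowerEnv_le_upperEnv (hF : IsSetCdf h s F) (hG : IsMultisetCdf h s G) (r : ℕ) :
    lowerEnv h F G r ≤ upperEnv h F G r := by
  rw [lowerEnv, upperEnv]
  split_ifs with hr
  · omega
  · have := lowerEnv_le_upperEnv hF hG (r + 1)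
    have := lowerEnv_le (h := h) (G := G) hF.succ_le (r + 1)
    have := le_upperEnv (h := h) (F := F) hG.mono (r + 1)
    have := add_jump_le hG.mono r
    have := hF.succ_le r
    have := jump_le_one G r
    omega
termination_by h - r

theorem project_mem_Icc (hF : IsSetCdf h s F) (hG : IsMultisetCdf h s G) (r : ℕ) :
    lowerEnv h F G r ≤ project h F G r ∧ project h F G r ≤ upperEnv h F G r := by
  induction r with
  | zero =>
    have := lowerEnv_le (h := h) (G := G) hF.succ_le 0
    have := hF.zero
    simp only [project]
    omega
  | succ r ih =>
    have := lowerEnv_le_upperEnv hF hG (r + 1)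
    have := upperEnv_add_jump_le hF hG r
    simp only [project]
    omega

theorem isPadding_project (hF : IsSetCdf h s F) (hG : IsMultisetCdf h s G) :
    IsPadding h s G (project h F G) where
  zero := rfl
  mono := monotone_nat_of_le_succ fun r => by simp only [project]; omega
  top r hr := by
    have := project_mem_Icc hF hG r
    rw [lowerEnv, if_pos hr, upperEnv, if_pos hr, hF.top r hr, hG.top r hr] at this
    omega
  succ_le r := by
    have := lowerEnv_succ_le hF hG r
    have := (project_mem_Icc hF hG r).1
    have := jump_le_one G r
    simp only [project]
    omega
  lt_succ_of_lt_succ r hr := by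
    have : jump G r = 1 := if_pos hr
    simp only [project]
    omega

theorem project_mem_uIcc (hF : IsSetCdf h s F) (hG : IsMultisetCdf h s G) (r : ℕ) :
    min (F r) (G r) ≤ project h F G r ∧ project h F G r ≤ max (F r) (G r) :=
  ⟨(min_le_lowerEnv r).trans (project_mem_Icc hF hG r).1,
    (project_mem_Icc hF hG r).2.trans (upperEnv_le r)⟩

theorem cdfDist_project_add (hF : IsSetCdf h s F) (hG : IsMultisetCdf h s G) :
    cdfDist h F (project h F G) + cdfDist h (project h F G) G = cdfDist h F G := by
  rw [cdfDist, cdfDist, cdfDist, ← sum_add_distrib]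
  exact sum_congr rfl fun r _ => by have := project_mem_uIcc hF hG r; omega

end Projection

section Chain

variable {h s : ℕ} {G : ℕ → ℕ → ℕ}

def padChain (h : ℕ) (G : ℕ → ℕ → ℕ) (F₀ : ℕ → ℕ) : ℕ → ℕ → ℕ
  | 0 => F₀
  | c + 1 => project h (padChain h G F₀ c) (G (c + 1))

theorem isPadding_padChain (hG : ∀ c, IsMultisetCdf h s (G c)) {F₀ : ℕ → ℕ}
    (hF₀ : IsPadding h s (G 0) F₀) : ∀ c, IsPadding h s (G c) (padChain h G F₀ c)
  | 0 => hF₀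
  | c + 1 => isPadding_project (isPadding_padChain hG hF₀ c).toIsSetCdf (hG (c + 1))

/-- Each step trades distance to `G` for distance along the chain, so the chain is no longer
than the sequence `G` plus its initial distance to `G`, minus the final one. -/
theorem padChain_length_add_le (hG : ∀ c, IsMultisetCdf h s (G c)) {F₀ : ℕ → ℕ}
    (hF₀ : IsPadding h s (G 0) F₀) (n : ℕ) :
    ∑ c ∈ range n, cdfDist h (padChain h G F₀ c) (padChain h G F₀ (c + 1)) +
        cdfDist h (padChain h G F₀ n) (G n) ≤
      cdfDist h F₀ (G 0) + ∑ c ∈ range n, cdfDist h (G c) (G (c + 1)) := by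
  induction n with
  | zero => simp [padChain]
  | succ n ih =>
    have hproj := cdfDist_project_add (isPadding_padChain hG hF₀ n).toIsSetCdf (hG (n + 1))
    have htri := cdfDist_triangle h (padChain h G F₀ n) (G n) (G (n + 1))
    simp only [sum_range_succ, padChain] at ih ⊢
    omega

theorem exists_isPadding (hs : s ≤ h) {G : ℕ → ℕ} (hG : IsMultisetCdf h s G) :
    ∃ F, IsPadding h s G F :=
  ⟨_, isPadding_project (F := fun r => min r s)
    { zero := by simp, mono := fun _ _ hab => min_le_min_right s hab, top := fun r hr => by omega,
      succ_le := fun r => by omega } hG⟩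

theorem exists_isPadding_min_cdfDist (hs : s ≤ h) {G : ℕ → ℕ} (hG : IsMultisetCdf h s G) :
    ∃ F, IsPadding h s G F ∧ ∀ F', IsPadding h s G F' → cdfDist h F G ≤ cdfDist h F' G := by
  have hne : {F | IsPadding h s G F}.Nonempty := exists_isPadding hs hG
  exact ⟨_, Function.argminOn_mem _ _ hne,
    fun F' hF' => Function.argminOn_le (fun F => cdfDist h F G) _ hF'⟩

theorem sum_range_reflect_symm (D : ℕ → ℕ → ℕ) (hD : ∀ a b, D a b = D b a) (n : ℕ) :
    ∑ c ∈ range n, D (n - c) (n - (c + 1)) = ∑ c ∈ range n, D c (c + 1) := by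
  rw [← sum_range_reflect (fun c => D c (c + 1))]
  refine sum_congr rfl fun c hc => ?_
  have := mem_range.mp hc
  rw [hD, show n - 1 - c = n - (c + 1) by omega, show n - (c + 1) + 1 = n - c by omega]

theorem exists_padChain_of_min (hG : ∀ c, IsMultisetCdf h s (G c)) {F₀ : ℕ → ℕ}
    (hF₀ : IsPadding h s (G 0) F₀) (n : ℕ)
    (hmin : ∀ F, IsPadding h s (G n) F → cdfDist h F₀ (G 0) ≤ cdfDist h F (G n)) :
    ∃ Fc : ℕ → ℕ → ℕ, (∀ c, IsPadding h s (G c) (Fc c)) ∧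
      ∑ c ∈ range n, cdfDist h (Fc c) (Fc (c + 1)) ≤ ∑ c ∈ range n, cdfDist h (G c) (G (c + 1)) :=
  ⟨padChain h G F₀, isPadding_padChain hG hF₀, by
    have := padChain_length_add_le hG hF₀ n
    have := hmin _ (isPadding_padChain hG hF₀ n)
    omega⟩

/-- Start from a padding closest to `G` at whichever end column admits the closer one, reversing
the columns if that is the last one. -/
theorem exists_padding_chain (hs : s ≤ h) (hG : ∀ c, IsMultisetCdf h s (G c)) (n : ℕ) :
    ∃ Fc : ℕ → ℕ → ℕ, (∀ c ≤ n, IsPadding h s (G c) (Fc c)) ∧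
      ∑ c ∈ range n, cdfDist h (Fc c) (Fc (c + 1)) ≤
        ∑ c ∈ range n, cdfDist h (G c) (G (c + 1)) := by
  obtain ⟨F₀, hF₀, hmin₀⟩ := exists_isPadding_min_cdfDist hs (hG 0)
  obtain ⟨F₁, hF₁, hmin₁⟩ := exists_isPadding_min_cdfDist hs (hG n)
  rcases le_total (cdfDist h F₀ (G 0)) (cdfDist h F₁ (G n)) with hle | hle
  · obtain ⟨Fc, hFc, hsum⟩ :=
      exists_padChain_of_min hG hF₀ n fun F hF => hle.trans (hmin₁ F hF)
    exact ⟨Fc, fun c _ => hFc c, hsum⟩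
  · obtain ⟨Fc, hFc, hsum⟩ := exists_padChain_of_min (G := fun c => G (n - c))
      (fun c => hG (n - c)) (by simpa using hF₁) n
      fun F hF => by simpa using hle.trans (hmin₀ F (by simpa using hF))
    refine ⟨fun c => Fc (n - c), fun c hc => by simpa [Nat.sub_sub_self hc] using hFc (n - c), ?_⟩
    rwa [sum_range_reflect_symm (fun a b => cdfDist h (Fc a) (Fc b)) (fun _ _ => cdfDist_comm ..),
      ← sum_range_reflect_symm (fun a b => cdfDist h (G a) (G b)) (fun _ _ => cdfDist_comm ..)]

end Chain

def jumpSet (h : ℕ) (F : ℕ → ℕ) : Finset ℕ := {x ∈ range h | F x < F (x + 1)}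

section JumpSet

variable {h s : ℕ} {F : ℕ → ℕ}

theorem IsMultisetCdf.le_top (hF : IsMultisetCdf h s F) (r : ℕ) : F r ≤ s :=
  (hF.mono (le_max_left r h)).trans (hF.top _ (le_max_right r h)).le

theorem IsMultisetCdf.lt_of_lt_succ (hF : IsMultisetCdf h s F) {x : ℕ}
    (hx : F x < F (x + 1)) : x < h := by
  by_contra! hxh
  rw [hF.top x hxh, hF.top (x + 1) (by omega)] at hx
  exact lt_irrefl _ hx

theorem IsSetCdf.count_eq (hF : IsSetCdf h s F) (r : ℕ) :
    Nat.count (fun x => F x < F (x + 1)) r = F r := by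
  induction r with
  | zero => simp [hF.zero]
  | succ r ih =>
    have := hF.mono (Nat.le_add_right r 1)
    have := hF.succ_le r
    rw [Nat.count_succ, ih]
    split_ifs <;> omega

theorem IsSetCdf.finite_setOf_lt_succ (hF : IsSetCdf h s F) :
    (Set.ofPred fun x => F x < F (x + 1)).Finite :=
  (Set.finite_Iio h).subset fun _ hx => hF.lt_of_lt_succ hx

theorem IsSetCdf.card_jumpSet (hF : IsSetCdf h s F) : #(jumpSet h F) = s := by
  rw [jumpSet, ← Nat.count_eq_card_filter_range, hF.count_eq, hF.top h le_rfl]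

theorem IsSetCdf.card_toFinset (hF : IsSetCdf h s F) : #hF.finite_setOf_lt_succ.toFinset = s := by
  have : hF.finite_setOf_lt_succ.toFinset = jumpSet h F := by
    ext x
    simp only [Set.Finite.mem_toFinset, jumpSet, mem_filter, mem_range]
    exact ⟨fun hx => ⟨hF.lt_of_lt_succ hx, hx⟩, And.right⟩
  rw [this, hF.card_jumpSet]

theorem IsSetCdf.nth_lt_iff (hF : IsSetCdf h s F) {k : ℕ} (hk : k < s) (r : ℕ) :
    Nat.nth (fun x => F x < F (x + 1)) k < r ↔ k < F r := by
  rw [← hF.count_eq r]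
  refine ⟨fun hlt => ?_, Nat.nth_lt_of_lt_count⟩
  have hk' : k < #hF.finite_setOf_lt_succ.toFinset := by rwa [hF.card_toFinset]
  calc k = Nat.count _ (Nat.nth _ k) := (Nat.count_nth_of_lt_card_finite _ hk').symm
    _ < _ := Nat.count_strict_mono (Nat.nth_mem_of_lt_card _ hk') hlt

theorem IsSetCdf.bijOn_nth (hF : IsSetCdf h s F) :
    Set.BijOn (Nat.nth fun x => F x < F (x + 1)) (range s) (jumpSet h F) := by
  have hcard := hF.card_toFinset
  refine ⟨fun k hk => ?_, ?_, fun x hx => ?_⟩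
  · have hk : k < s := mem_range.mp hk
    refine mem_filter.mpr ⟨mem_range.mpr ((hF.nth_lt_iff hk h).mpr ?_), ?_⟩
    · rwa [hF.top h le_rfl]
    · exact Nat.nth_mem_of_lt_card hF.finite_setOf_lt_succ (by rwa [hcard])
  · rw [coe_range, ← hcard]
    exact Nat.nth_injOn _
  · obtain ⟨-, hx⟩ := mem_filter.mp hx
    refine ⟨Nat.count _ x, ?_, Nat.nth_count hx⟩
    rw [mem_coe, mem_range, hF.count_eq]
    exact hx.trans_le (hF.le_top _)

theorem natEMD_jumpSet_le_cdfDist {F' : ℕ → ℕ} (hF : IsSetCdf h s F) (hF' : IsSetCdf h s F') :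
    natEMD (jumpSet h F) (jumpSet h F') ≤ cdfDist h F F' := by
  set u := Nat.nth fun x => F x < F (x + 1)
  set v := Nat.nth fun x => F' x < F' (x + 1)
  calc natEMD (jumpSet h F) (jumpSet h F')
      ≤ ∑ k ∈ range s, ((u k : ℤ) - v k).natAbs := natEMD_le_of_bijOn hF.bijOn_nth hF'.bijOn_nth
    _ = ∑ k ∈ range s, #{r ∈ range h | Xor (k < F r) (k < F' r)} := by
      refine sum_congr rfl fun k hk => ?_
      have hk : k < s := mem_range.mp hk
      rw [← card_filter_range_xor_const_lt ((hF.nth_lt_iff hk h).mpr (by rwa [hF.top h le_rfl]))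
        ((hF'.nth_lt_iff hk h).mpr (by rwa [hF'.top h le_rfl]))]
      simp only [hF.nth_lt_iff hk, hF'.nth_lt_iff hk]
    _ = ∑ r ∈ range h, #{k ∈ range s | Xor (k < F r) (k < F' r)} := by
      simp only [card_filter]
      exact sum_comm
    _ = cdfDist h F F' :=
      sum_congr rfl fun r _ => card_filter_range_xor_lt_const (hF.le_top r) (hF'.le_top r)

end JumpSet

section Paths

variable {h w : ℕ}

theorem mem_pathSupp {q : ℕ → Fin h} {x : Fin h × Fin w} : x ∈ pathSupp q ↔ q x.2 = x.1 := by
  simp only [pathSupp, mem_image, mem_univ, true_and]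
  exact ⟨by rintro ⟨j, rfl⟩; rfl, fun hx => ⟨x.2, Prod.ext hx rfl⟩⟩

theorem mem_colSupp {Γ : Finset (Fin h × Fin w)} {x : Fin h × Fin w} :
    x ∈ Γ ↔ (x.1 : ℕ) ∈ colSupp Γ x.2 := by
  simp only [colSupp, mem_image, mem_filter]
  refine ⟨fun hx => ⟨x, ⟨hx, rfl⟩, rfl⟩, ?_⟩
  rintro ⟨y, ⟨hy, hyx⟩, hyx'⟩
  rwa [show x = y from Prod.ext (Fin.ext hyx'.symm) (Fin.ext hyx.symm)]

theorem colSupp_filter_mem {Ψ : ℕ → Finset ℕ} (hΨ : ∀ c, Ψ c ⊆ range h) {c : ℕ} (hc : c < w) :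
    colSupp ({x | (x.1 : ℕ) ∈ Ψ x.2} : Finset (Fin h × Fin w)) c = Ψ c := by
  ext r
  simp only [colSupp, mem_image, mem_filter, mem_univ, true_and]
  refine ⟨?_, fun hr => ⟨(⟨r, mem_range.mp (hΨ c hr)⟩, ⟨c, hc⟩), ⟨hr, rfl⟩, rfl⟩⟩
  rintro ⟨x, ⟨hx, rfl⟩, rfl⟩
  exact hx

def pathsCdf (s : ℕ) (q : ℕ → ℕ → Fin h) (c r : ℕ) : ℕ := #{i ∈ range s | (q i c : ℕ) < r}

variable {s : ℕ} (q : ℕ → ℕ → Fin h)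

theorem isMultisetCdf_pathsCdf (c : ℕ) : IsMultisetCdf h s (pathsCdf s q c) where
  zero := by simp [pathsCdf]
  mono _ _ hab := card_le_card (monotone_filter_right _ fun _ _ hi => hi.trans_le hab)
  top r hr := by
    rw [pathsCdf, filter_true_of_mem fun i _ => (q i c).isLt.trans_le hr, card_range]

theorem pathsCdf_lt_succ {i : ℕ} (hi : i < s) (c : ℕ) :
    pathsCdf s q c (q i c) < pathsCdf s q c (q i c + 1) := by
  refine card_lt_card ⟨monotone_filter_right _ fun _ _ hj => Nat.lt_succ_of_lt hj, ?_⟩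
  intro hsub
  have := (mem_filter.mp (hsub (mem_filter.mpr ⟨mem_range.mpr hi, Nat.lt_succ_self _⟩))).2
  exact lt_irrefl _ this

theorem cdfDist_pathsCdf_le (c c' : ℕ) :
    cdfDist h (pathsCdf s q c) (pathsCdf s q c') ≤
      ∑ i ∈ range s, ((q i c : ℤ) - q i c').natAbs := by
  calc cdfDist h (pathsCdf s q c) (pathsCdf s q c')
      ≤ ∑ r ∈ range h, #{i ∈ range s | Xor ((q i c : ℕ) < r) ((q i c' : ℕ) < r)} := by
        refine sum_le_sum fun r _ => ?_
        simp only [pathsCdf, card_filter]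
        push_cast
        rw [← sum_sub_distrib]
        refine (Int.natAbs_sum_le _ _).trans (sum_le_sum fun i _ => ?_)
        simp only [Xor]
        split_ifs <;> simp_all
    _ = ∑ i ∈ range s, #{r ∈ range h | Xor ((q i c : ℕ) < r) ((q i c' : ℕ) < r)} := by
        simp only [card_filter]
        exact sum_comm
    _ = ∑ i ∈ range s, ((q i c : ℤ) - q i c').natAbs :=
        sum_congr rfl fun i _ => card_filter_range_xor_const_lt (q i c).isLt (q i c').isLt

theorem exists_superset_colSupp_card_eq (hs : s ≤ h) :
    ∃ Γ : Finset (Fin h × Fin w), (∀ c < w, #(colSupp Γ c) = s) ∧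
      suppEMD Γ ≤ ∑ i ∈ range s, pathEMD (q i) w ∧
      (range s).biUnion (fun i => pathSupp (q i)) ⊆ Γ := by
  obtain ⟨Fc, hFc, hlen⟩ :=
    exists_padding_chain (G := pathsCdf s q) hs (isMultisetCdf_pathsCdf q) (w - 1)
  have hFc' : ∀ c < w, IsPadding h s (pathsCdf s q c) (Fc c) := fun c hc => hFc c (by omega)
  set Γ : Finset (Fin h × Fin w) := {x | (x.1 : ℕ) ∈ jumpSet h (Fc x.2)}
  have hcol : ∀ c < w, colSupp Γ c = jumpSet h (Fc c) := fun c hc =>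
    colSupp_filter_mem (Ψ := fun c => jumpSet h (Fc c)) (fun _ => filter_subset _ _) hc
  refine ⟨Γ, fun c hc => ?_, ?_, ?_⟩
  · rw [hcol c hc, (hFc' c hc).card_jumpSet]
  · calc _ = ∑ c ∈ range (w - 1), natEMD (jumpSet h (Fc c)) (jumpSet h (Fc (c + 1))) :=
          sum_congr rfl fun c hc => by
            have := mem_range.mp hc
            rw [hcol c (by omega), hcol (c + 1) (by omega)]
      _ ≤ ∑ c ∈ range (w - 1), cdfDist h (Fc c) (Fc (c + 1)) :=
          sum_le_sum fun c hc => by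
            have := mem_range.mp hc
            exact natEMD_jumpSet_le_cdfDist (hFc' c (by omega)).toIsSetCdf
              (hFc' (c + 1) (by omega)).toIsSetCdf
      _ ≤ ∑ c ∈ range (w - 1), cdfDist h (pathsCdf s q c) (pathsCdf s q (c + 1)) := hlen
      _ ≤ ∑ c ∈ range (w - 1), ∑ i ∈ range s, ((q i c : ℤ) - q i (c + 1)).natAbs :=
          sum_le_sum fun c _ => cdfDist_pathsCdf_le q c (c + 1)
      _ = ∑ i ∈ range s, pathEMD (q i) w := by rw [sum_comm]; rfl
  · intro x hx
    obtain ⟨i, hi, hx⟩ := mem_biUnion.mp hx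
    rw [mem_pathSupp] at hx
    refine mem_filter.mpr ⟨mem_univ _, mem_filter.mpr ⟨mem_range.mpr x.1.isLt, ?_⟩⟩
    rw [← hx]
    exact (hFc' x.2 x.2.isLt).lt_succ_of_lt_succ _ (pathsCdf_lt_succ q (mem_range.mp hi) x.2)

end Paths

theorem exists_perm_succ_mul_le {s B : ℕ} (e : Fin s → ℕ) (he : ∑ i, e i ≤ B) :
    ∃ τ : Equiv.Perm (Fin s), ∀ i : Fin s, ((i : ℕ) + 1) * e (τ i) ≤ B := by
  refine ⟨Fin.revPerm.trans (Tuple.sort e), fun i => ?_⟩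
  have hanti : ∀ l : Fin s, l ≤ i → e (Tuple.sort e (Fin.rev i)) ≤ e (Tuple.sort e (Fin.rev l)) :=
    fun l hl => Tuple.monotone_sort e (Fin.rev_le_rev.mpr hl)
  calc ((i : ℕ) + 1) * e (Tuple.sort e (Fin.rev i))
      = ∑ _l ∈ Iic i, e (Tuple.sort e (Fin.rev i)) := by rw [sum_const, Fin.card_Iic, smul_eq_mul]
    _ ≤ ∑ l ∈ Iic i, e (Tuple.sort e (Fin.rev l)) :=
        sum_le_sum fun l hl => hanti l (mem_Iic.mp hl)
    _ ≤ ∑ l, e ((Fin.revPerm.trans (Tuple.sort e)) l) :=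
        sum_le_univ_sum_of_nonneg fun _ => Nat.zero_le _
    _ = ∑ l, e l := Equiv.sum_comp _ e
    _ ≤ B := he

def followPath (f : ℕ → ℕ → ℕ) (x : ℕ) : ℕ → ℕ
  | 0 => x
  | c + 1 => f c (followPath f x c)

section Decomposition

variable {h w s : ℕ}

theorem lt_of_mem_colSupp {Γ : Finset (Fin h × Fin w)} {c r : ℕ} (hr : r ∈ colSupp Γ c) :
    r < h := by
  obtain ⟨x, -, rfl⟩ := mem_image.mp hr
  exact x.1.isLt

/-- The paths follow optimal matchings between consecutive columns. -/
theorem exists_paths_of_colSupp_card_eq (hw : 0 < w) {Γ : Finset (Fin h × Fin w)}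
    (hcard : ∀ c < w, #(colSupp Γ c) = s) :
    ∃ P : Fin s → ℕ → Fin h, ∑ i, pathEMD (P i) w = suppEMD Γ ∧
      Γ = univ.biUnion (fun i => pathSupp (P i)) ∧ ∀ c < w, Function.Injective fun i => P i c := by
  choose! f hf using fun c (hc : c < w - 1) =>
    exists_bijOn_natEMD_eq (A := colSupp Γ c) (B := colSupp Γ (c + 1))
      (by rw [hcard c (by omega), hcard (c + 1) (by omega)])
  let e := (colSupp Γ 0).orderIsoOfFin (hcard 0 hw)
  have he : Set.BijOn (fun i => (e i : ℕ)) Set.univ (colSupp Γ 0) :=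
    ⟨fun i _ => (e i).2, fun i _ j _ hij => e.injective (Subtype.ext hij),
      fun x hx => ⟨e.symm ⟨x, hx⟩, trivial, by simp⟩⟩
  have htraj : ∀ c ≤ w - 1,
      Set.BijOn (fun i => followPath f (e i) c) Set.univ (colSupp Γ c) := by
    intro c hc
    induction c with
    | zero => exact he
    | succ c ih => exact (hf c (by omega)).1.comp (ih (by omega))
  have hlt : ∀ i c, followPath f (e i) (min c (w - 1)) < h := fun i c =>
    lt_of_mem_colSupp ((htraj _ (min_le_right _ _)).mapsTo trivial)
  let P : Fin s → ℕ → Fin h := fun i c => ⟨followPath f (e i) (min c (w - 1)), hlt i c⟩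
  have hP : ∀ i, ∀ c < w, (P i c : ℕ) = followPath f (e i) c := fun i c hc => by
    simp only [P, min_eq_left (Nat.le_sub_one_of_lt hc)]
  refine ⟨P, ?_, ?_, fun c hc i j hij => (htraj c (by omega)).injOn trivial trivial ?_⟩
  · calc ∑ i, pathEMD (P i) w
        = ∑ c ∈ range (w - 1), ∑ i, ((followPath f (e i) c : ℤ) -
            f c (followPath f (e i) c)).natAbs := by
          rw [sum_comm]
          refine sum_congr rfl fun i _ => sum_congr rfl fun c hc => ?_
          have := mem_range.mp hc
          rw [hP i c (by omega), hP i (c + 1) (by omega)]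
          rfl
      _ = suppEMD Γ := sum_congr rfl fun c hc => by
          have hc := mem_range.mp hc
          rw [← (hf c hc).2]
          exact sum_nbij _ (fun i _ => (htraj c (by omega)).mapsTo trivial)
            (fun i _ j _ hij => (htraj c (by omega)).injOn trivial trivial hij)
            (fun y hy => by simpa using (htraj c (by omega)).surjOn hy) fun _ _ => rfl
  · ext x
    rw [mem_colSupp, mem_biUnion]
    simp only [mem_univ, true_and, mem_pathSupp, ← Fin.val_inj, hP _ x.2 x.2.isLt]
    exact ⟨fun hx => by simpa using (htraj x.2 (by omega)).surjOn hx,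
      fun ⟨i, hi⟩ => hi ▸ (htraj x.2 (by omega)).mapsTo trivial⟩
  · simpa only [← hP i c hc, ← hP j c hc] using congrArg Fin.val hij

theorem exists_sorted_paths_of_colSupp_card_eq (hw : 0 < w) {Γ : Finset (Fin h × Fin w)}
    (hcard : ∀ c < w, #(colSupp Γ c) = s) :
    ∃ P : Fin s → ℕ → Fin h, (∀ i : Fin s, ((i : ℕ) + 1) * pathEMD (P i) w ≤ suppEMD Γ) ∧
      Γ = univ.biUnion (fun i => pathSupp (P i)) ∧ ∀ c < w, Function.Injective fun i => P i c := by
  obtain ⟨P, hsum, hΓ, hinj⟩ := exists_paths_of_colSupp_card_eq hw hcard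
  obtain ⟨τ, hτ⟩ := exists_perm_succ_mul_le (fun i => pathEMD (P i) w) hsum.le
  refine ⟨fun i => P (τ i), hτ, ?_, fun c hc => (hinj c hc).comp τ.injective⟩
  rw [hΓ]
  ext x
  simp only [mem_biUnion, mem_univ, true_and]
  exact (τ.exists_congr fun _ => Iff.rfl).symm

end Decomposition

section Mass

variable {h w : ℕ} {p : ℝ} (X : Matrix (Fin h) (Fin w) ℝ)

noncomputable def lpMass (p : ℝ) (X : Matrix (Fin h) (Fin w) ℝ) (S : Finset (Fin h × Fin w)) : ℝ :=
  ∑ x ∈ S, |X x.1 x.2| ^ p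

theorem lpMass_nonneg (S : Finset (Fin h × Fin w)) : 0 ≤ lpMass p X S :=
  sum_nonneg fun _ _ => by positivity

theorem lpMass_mono {S T : Finset (Fin h × Fin w)} (hST : S ⊆ T) : lpMass p X S ≤ lpMass p X T :=
  sum_le_sum_of_subset_of_nonneg hST fun _ _ _ => by positivity

theorem lpMass_matRestrict (hp : p ≠ 0) (S T : Finset (Fin h × Fin w)) :
    lpMass p (matRestrict X T) S = lpMass p X (S ∩ T) := by
  have hx : ∀ x : Fin h × Fin w,
      |matRestrict X T x.1 x.2| ^ p = if x ∈ T then |X x.1 x.2| ^ p else 0 := fun x => by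
    simp only [matRestrict, Matrix.of_apply, Prod.mk.eta]
    split_ifs <;> simp [Real.zero_rpow hp]
  rw [lpMass, lpMass, sum_congr rfl fun x _ => hx x, sum_ite_mem]

theorem matLpNorm_matRestrict_rpow (hp : p ≠ 0) (S : Finset (Fin h × Fin w)) :
    matLpNorm p (matRestrict X S) ^ p = lpMass p X S := by
  have hsum : ∑ r, ∑ c, |matRestrict X S r c| ^ p = lpMass p X S := by
    rw [← Fintype.sum_prod_type', ← lpMass, lpMass_matRestrict X hp, univ_inter]
  rw [matLpNorm, ← Real.rpow_mul (hsum ▸ sum_nonneg fun _ _ => by positivity),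
    one_div_mul_cancel hp, Real.rpow_one, hsum]

theorem pathWeight_eq_lpMass (q : ℕ → Fin h) : pathWeight p X q = lpMass p X (pathSupp q) := by
  rw [lpMass, pathSupp, sum_image fun _ _ _ _ hij => congrArg Prod.snd hij]
  rfl

variable {s : ℕ} {Xs : ℕ → Matrix (Fin h) (Fin w) ℝ} {q : ℕ → ℕ → Fin h}

theorem eq_matRestrict_compl_biUnion (hXs0 : Xs 0 = X)
    (hXs : ∀ i r c, Xs (i + 1) r c =
      if (r, c) ∈ (pathSupp (q i) : Finset (Fin h × Fin w)) then 0 else Xs i r c) (i : ℕ) :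
    Xs i = matRestrict X ((range i).biUnion fun l => pathSupp (q l))ᶜ := by
  induction i with
  | zero => ext r c; simp [hXs0, matRestrict]
  | succ i ih =>
    ext r c
    rw [hXs, ih, range_add_one, biUnion_insert]
    simp only [matRestrict, Matrix.of_apply, mem_compl, mem_union]
    split_ifs <;> tauto

theorem sum_pathWeight_eq_lpMass_biUnion
    (hXs : ∀ i, Xs i = matRestrict X ((range i).biUnion fun l => pathSupp (q l))ᶜ)
    (hp : p ≠ 0) (n : ℕ) :
    ∑ i ∈ range n, pathWeight p (Xs i) (q i) =
      lpMass p X ((range n).biUnion fun i => pathSupp (q i)) := by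
  induction n with
  | zero => simp [lpMass]
  | succ n ih =>
    set O := (range n).biUnion fun i => (pathSupp (q i) : Finset (Fin h × Fin w))
    calc ∑ i ∈ range (n + 1), pathWeight p (Xs i) (q i)
        = lpMass p X O + lpMass p X (pathSupp (q n) \ O) := by
          rw [sum_range_succ, ih, pathWeight_eq_lpMass, hXs, lpMass_matRestrict X hp,
            sdiff_eq_inter_compl]
      _ = lpMass p X ((range (n + 1)).biUnion fun i => pathSupp (q i)) := by
          rw [range_add_one, biUnion_insert, union_comm, ← union_sdiff_self_eq_union, lpMass,
            lpMass, lpMass, sum_union disjoint_sdiff]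

/-- What the family keeps outside `Ω` is bounded by the greedy gains, and what lies inside `Ω`
is counted once. -/
theorem lpMass_biUnion_le_two_mul (hp : p ≠ 0)
    (hXs : ∀ i, Xs i = matRestrict X ((range i).biUnion fun l => pathSupp (q l))ᶜ)
    {P : Fin s → ℕ → Fin h} (hP : ∀ c < w, Function.Injective fun i => P i c)
    (hgreedy : ∀ i : Fin s, pathWeight p (Xs i) (P i) ≤ pathWeight p (Xs i) (q i)) :
    lpMass p X (univ.biUnion fun i => pathSupp (P i)) ≤
      2 * lpMass p X ((range s).biUnion fun i => pathSupp (q i)) := by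
  set Ω := (range s).biUnion fun i => pathSupp (q i)
  have hdisj : (↑(univ : Finset (Fin s)) : Set (Fin s)).PairwiseDisjoint
      fun i => (pathSupp (P i) : Finset (Fin h × Fin w)) := by
    intro i _ j _ hij
    refine disjoint_left.mpr fun x hi hj => hij (hP x.2 x.2.isLt ?_)
    rw [mem_pathSupp] at hi hj
    exact hi.trans hj.symm
  have hstep : ∀ i : Fin s,
      lpMass p X (pathSupp (P i)) - lpMass p X (pathSupp (P i) ∩ Ω) ≤
        pathWeight p (Xs i) (q i) := by
    intro i
    have hsub :
        pathSupp (P i) \ Ω ⊆ pathSupp (P i) ∩ ((range i).biUnion fun l => pathSupp (q l))ᶜ :=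
      fun x hx => mem_inter.mpr ⟨(mem_sdiff.mp hx).1, mem_compl.mpr fun hxi => (mem_sdiff.mp hx).2
        (biUnion_subset_biUnion_of_subset_left _ (range_subset_range.mpr i.isLt.le) hxi)⟩
    have hsplit : lpMass p X (pathSupp (P i) ∩ Ω) + lpMass p X (pathSupp (P i) \ Ω) =
        lpMass p X (pathSupp (P i)) := sum_inter_add_sum_sdiff _ _ _
    have := (lpMass_mono X hsub).trans_eq (lpMass_matRestrict X hp _ _).symm
    rw [← hXs, ← pathWeight_eq_lpMass] at this
    linarith [hgreedy i]
  have hinter : lpMass p X ((univ.biUnion fun i => pathSupp (P i)) ∩ Ω) ≤ lpMass p X Ω :=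
    lpMass_mono X inter_subset_right
  rw [biUnion_inter, lpMass, sum_biUnion (hdisj.mono fun _ => inter_subset_left)] at hinter
  rw [lpMass, sum_biUnion hdisj]
  have := sum_le_sum fun i (_ : i ∈ univ) => hstep i
  rw [sum_sub_distrib, Fin.sum_univ_eq_sum_range (fun i => pathWeight p (Xs i) (q i)),
    sum_pathWeight_eq_lpMass_biUnion X hXs hp] at this
  simp only [lpMass] at this hinter ⊢
  linarith

end Mass

theorem sum_div_succ_le_ceil_mul (B s : ℕ) :
    ∑ i ∈ range s, B / (i + 1) ≤ ⌈∑ i ∈ range s, (1 : ℝ) / (i + 1)⌉₊ * B := by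
  have : (∑ i ∈ range s, B / (i + 1) : ℕ) ≤ (B : ℝ) * ∑ i ∈ range s, (1 : ℝ) / (i + 1) := by
    push_cast
    rw [mul_sum]
    exact sum_le_sum fun i _ => Nat.cast_div_le.trans_eq (by push_cast; ring)
  have := this.trans (mul_le_mul_of_nonneg_left (Nat.le_ceil _) (Nat.cast_nonneg B))
  exact_mod_cast this.trans_eq (mul_comm _ _)

end HeadApprox

theorem stmt11_general (h w s B : ℕ) (p : ℝ) (hp : 1 ≤ p)
    (hw : 0 < w) (hs : s ≤ h)
    (X : Matrix (Fin h) (Fin w) ℝ)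
    (Hs : ℝ) (hHs : Hs = ∑ i ∈ Finset.range s, (1 : ℝ) / (i + 1))
    (Xs : ℕ → Matrix (Fin h) (Fin w) ℝ) (hXs0 : Xs 0 = X)
    (q : ℕ → ℕ → Fin h)
    (hbudget : ∀ i < s, pathEMD (q i) w ≤ B / (i + 1))
    (hmax : ∀ i < s, ∀ q' : ℕ → Fin h, pathEMD q' w ≤ B / (i + 1) →
      pathWeight p (Xs i) q' ≤ pathWeight p (Xs i) (q i))
    (hXs : ∀ i r c, Xs (i + 1) r c =
      if (r, c) ∈ (pathSupp (q i) : Finset (Fin h × Fin w)) then 0 else Xs i r c)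
    (Ω : Finset (Fin h × Fin w))
    (hΩ : Ω = (Finset.range s).biUnion (fun i => pathSupp (q i))) :
    (∃ Γ ∈ cemdModel h w s (⌈Hs⌉₊ * B), Ω ⊆ Γ) ∧
    ∀ Γ ∈ cemdModel h w s B,
      matLpNorm p (matRestrict X Ω) ^ p ≥ (1 / 4) * matLpNorm p (matRestrict X Γ) ^ p := by
  have hp0 : p ≠ 0 := (zero_lt_one.trans_le hp).ne'
  subst hΩ hHs
  constructor
  · obtain ⟨Γ, hcard, hemd, hsub⟩ := HeadApprox.exists_superset_colSupp_card_eq (w := w) q hs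
    refine ⟨Γ, ⟨hcard, ?_⟩, hsub⟩
    calc suppEMD Γ ≤ ∑ i ∈ Finset.range s, pathEMD (q i) w := hemd
      _ ≤ ∑ i ∈ Finset.range s, B / (i + 1) :=
          Finset.sum_le_sum fun i hi => hbudget i (Finset.mem_range.mp hi)
      _ ≤ _ := HeadApprox.sum_div_succ_le_ceil_mul B s
  · rintro Γ ⟨hcard, hemd⟩
    obtain ⟨P, hPemd, rfl, hinj⟩ := HeadApprox.exists_sorted_paths_of_colSupp_card_eq hw hcard
    have hbeaten : ∀ i : Fin s, pathWeight p (Xs i) (P i) ≤ pathWeight p (Xs i) (q i) :=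
      fun i => hmax i i.isLt (P i)
        ((Nat.le_div_iff_mul_le i.val.succ_pos).mpr (by linarith [hPemd i]))
    have hhalf := HeadApprox.lpMass_biUnion_le_two_mul X hp0
      (HeadApprox.eq_matRestrict_compl_biUnion X hXs0 hXs) hinj hbeaten
    rw [ge_iff_le, HeadApprox.matLpNorm_matRestrict_rpow X hp0,
      HeadApprox.matLpNorm_matRestrict_rpow X hp0]
    linarith [HeadApprox.lpMass_nonneg (p := p) X (Finset.univ.biUnion fun i => pathSupp (P i))]

theorem stmt11 (h w s B k : ℕ) (p : ℝ) (hp : 1 ≤ p)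
    (hw : 0 < w) (hk : k = s * w) (hs : s ≤ h)
    (X : Matrix (Fin h) (Fin w) ℝ)
    (Hs : ℝ) (hHs : Hs = ∑ i ∈ Finset.range s, (1 : ℝ) / (i + 1))
    (Xs : ℕ → Matrix (Fin h) (Fin w) ℝ) (hXs0 : Xs 0 = X)
    (q : ℕ → ℕ → Fin h)
    (hbudget : ∀ i < s, pathEMD (q i) w ≤ B / (i + 1))
    (hmax : ∀ i < s, ∀ q' : ℕ → Fin h, pathEMD q' w ≤ B / (i + 1) →
      pathWeight p (Xs i) q' ≤ pathWeight p (Xs i) (q i))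
    (hXs : ∀ i r c, Xs (i + 1) r c =
      if (r, c) ∈ (pathSupp (q i) : Finset (Fin h × Fin w)) then 0 else Xs i r c)
    (Ω : Finset (Fin h × Fin w))
    (hΩ : Ω = (Finset.range s).biUnion (fun i => pathSupp (q i))) :
    (∃ Γ ∈ cemdModel h w s (⌈Hs⌉₊ * B), Ω ⊆ Γ) ∧
    ∀ Γ ∈ cemdModel h w s B,
      matLpNorm p (matRestrict X Ω) ^ p ≥ (1 / 4) * matLpNorm p (matRestrict X Γ) ^ p :=
  stmt11_general h w s B p hp hw hs X Hs hHs Xs hXs0 q hbudget hmax hXs Ω hΩ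
end

section
/- Let X ∈ ℝ^{h×w}, p ≥ 1, let k be a multiple of w with s = k/w ≤ h, let B ∈ ℕ, and let λ ≥ 0. Suppose Ω is a support with exactly s entries in every column that minimizes ‖X − X_Γ‖_p^p + λ·EMD(Γ) over all supports Γ with exactly s entries in every column, and suppose EMD(Ω) ≥ B. Then ‖X − X_Ω‖_p^p ≤ min_{Γ ∈ 𝕄_{k,B}} ‖X − X_Γ‖_p^p. -/
theorem stmt13_general (h w s B : ℕ) (p : ℝ)
    (X : Matrix (Fin h) (Fin w) ℝ) (lam : ℝ) (hlam : 0 ≤ lam)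
    (Ω : Finset (Fin h × Fin w))
    (hmin : ∀ Γ : Finset (Fin h × Fin w), (∀ c < w, (colSupp Γ c).card = s) →
      matLpNorm p (X - matRestrict X Ω) ^ p + lam * suppEMD Ω ≤
        matLpNorm p (X - matRestrict X Γ) ^ p + lam * suppEMD Γ)
    (hEMD : B ≤ suppEMD Ω) :
    ∀ Γ ∈ cemdModel h w s B,
      matLpNorm p (X - matRestrict X Ω) ^ p ≤ matLpNorm p (X - matRestrict X Γ) ^ p := by
  rintro Γ ⟨hΓcol, hΓbudget⟩
  have hpenalty : lam * suppEMD Γ ≤ lam * suppEMD Ω :=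
    mul_le_mul_of_nonneg_left (by exact_mod_cast hΓbudget.trans hEMD) hlam
  linarith [hmin Γ hΓcol]

theorem stmt13 (h w s B k : ℕ) (p : ℝ) (hp : 1 ≤ p) (hk : k = s * w) (hs : s ≤ h)
    (X : Matrix (Fin h) (Fin w) ℝ) (lam : ℝ) (hlam : 0 ≤ lam)
    (Ω : Finset (Fin h × Fin w))
    (hcol : ∀ c < w, (colSupp Ω c).card = s)
    (hmin : ∀ Γ : Finset (Fin h × Fin w), (∀ c < w, (colSupp Γ c).card = s) →
      matLpNorm p (X - matRestrict X Ω) ^ p + lam * suppEMD Ω ≤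
        matLpNorm p (X - matRestrict X Γ) ^ p + lam * suppEMD Γ)
    (hEMD : B ≤ suppEMD Ω) :
    ∀ Γ ∈ cemdModel h w s B,
      matLpNorm p (X - matRestrict X Ω) ^ p ≤ matLpNorm p (X - matRestrict X Γ) ^ p :=
  stmt13_general h w s B p X lam hlam Ω hmin hEMD
end
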